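/- arXiv:2206.03438 — 3 statements merged into one kernel-verified Lean document; each statement's English description precedes it below -/
import Mathlib

section
/- Let K be a spherically complete valued field of equi-characteristic 0, let B ⊆ Kⁿ be a ball, let S be a set and χ : B → S a map. If χ is V̄₁-riso-trivial and V̄₂-riso-trivial on B for subspaces V̄₁, V̄₂ ⊆ RF(K)ⁿ, then χ is (V̄₁ + V̄₂)-riso-trivial on B. Consequently there exists a unique maximal subspace of RF(K)ⁿ (the riso-triviality space rtsp_B(χ)) for which χ is riso-trivial on B. -/
open scoped Classical

variable {K : Type*} [Field K]

/-- The sup-norm on `Kⁿ` induced by the valuation of a valuation subring `A ⊆ K`. -/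
noncomputable def vnrm (A : ValuationSubring K) {n : ℕ} (x : Fin n → K) :
    A.ValueGroup :=
  letI : OrderBot A.ValueGroup :=
    { bot := 0, bot_le := fun _ => zero_le' }
  Finset.univ.sup fun i => A.valuation (x i)

/-- A (valuative) ball in `K`. -/
def IsBall1 (A : ValuationSubring K) (B : Set K) : Prop :=
  B.Infinite ∧ ∀ x ∈ B, ∀ x' ∈ B, ∀ y : K,
    A.valuation (x - y) ≤ A.valuation (x - x') → y ∈ B

/-- A (valuative) ball in `Kⁿ`. -/
def IsBall (A : ValuationSubring K) {n : ℕ} (B : Set (Fin n → K)) : Prop :=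
  B.Infinite ∧ ∀ x ∈ B, ∀ x' ∈ B, ∀ y : Fin n → K,
    vnrm A (x - y) ≤ vnrm A (x - x') → y ∈ B

/-- `K` is spherically complete. -/
def SphericallyComplete (A : ValuationSubring K) : Prop :=
  ∀ C : Set (Set K), C.Nonempty → (∀ B ∈ C, IsBall1 A B) →
    IsChain (· ⊆ ·) C → (⋂₀ C).Nonempty

/-- A risometry from `B₁` onto `B₂`. -/
def IsRisometryOn (A : ValuationSubring K) {n : ℕ}
    (φ : (Fin n → K) → (Fin n → K)) (B₁ B₂ : Set (Fin n → K)) : Prop :=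
  Set.BijOn φ B₁ B₂ ∧
    ∀ x₁ ∈ B₁, ∀ x₂ ∈ B₁, x₁ ≠ x₂ →
      vnrm A (φ x₁ - φ x₂ - (x₁ - x₂)) < vnrm A (x₁ - x₂)

/-- Coordinatewise residue map `𝒪ⁿ → RFⁿ` (extended by `0` off the valuation ring). -/
noncomputable def resVec (A : ValuationSubring K) {n : ℕ} (x : Fin n → K) :
    Fin n → IsLocalRing.ResidueField A :=
  fun i => if h : x i ∈ A then IsLocalRing.residue A ⟨x i, h⟩ else 0

/-- `V ⊆ Kⁿ` is a lift of the residue subspace `Vbar ⊆ RFⁿ`: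
the image under `res` of `V ∩ 𝒪ⁿ` is exactly `Vbar`. -/
def IsLift (A : ValuationSubring K) {n : ℕ} (V : Submodule K (Fin n → K))
    (Vbar : Submodule (IsLocalRing.ResidueField A)
      (Fin n → IsLocalRing.ResidueField A)) : Prop :=
  {yb | ∃ x ∈ V, (∀ i, x i ∈ A) ∧ resVec A x = yb} = (Vbar : Set _)

/-- `χ` is `Vbar`-riso-trivial on `B`: there is a lift `V` of `Vbar` and a risometry
`φ : B → B` such that `χ ∘ φ` is `V`-translation invariant on `B`. -/
def RisoTrivialOn (A : ValuationSubring K) {n : ℕ} {S : Type*}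
    (χ : (Fin n → K) → S) (B : Set (Fin n → K))
    (Vbar : Submodule (IsLocalRing.ResidueField A)
      (Fin n → IsLocalRing.ResidueField A)) : Prop :=
  ∃ V : Submodule K (Fin n → K), IsLift A V Vbar ∧
    ∃ φ : (Fin n → K) → (Fin n → K), IsRisometryOn A φ B B ∧
      ∀ x ∈ B, ∀ x' ∈ B, x - x' ∈ V → χ (φ x) = χ (φ x')


namespace RisoAux


noncomputable instance vgOrderBot (A : ValuationSubring K) : OrderBot A.ValueGroup :=
  { bot := 0, bot_le := fun _ => zero_le' }

variable (A : ValuationSubring K) {n : ℕ}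

theorem vnrm_def (x : Fin n → K) :
    vnrm A x = Finset.univ.sup fun i => A.valuation (x i) := rfl

theorem bot_eq_zeroΓ : (⊥ : A.ValueGroup) = 0 := rfl

theorem vnrm_le_iff {x : Fin n → K} {γ : A.ValueGroup} :
    vnrm A x ≤ γ ↔ ∀ i, A.valuation (x i) ≤ γ := by
  rw [vnrm_def, Finset.sup_le_iff]; simp

theorem coord_le_vnrm (x : Fin n → K) (i : Fin n) : A.valuation (x i) ≤ vnrm A x := by
  rw [vnrm_def]
  exact Finset.le_sup (f := fun i => A.valuation (x i)) (Finset.mem_univ i)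

theorem vnrm_zero : vnrm A (0 : Fin n → K) = 0 := by
  rw [vnrm_def]
  rw [show (0 : A.ValueGroup) = ⊥ from rfl]
  apply le_bot_iff.mp
  rw [Finset.sup_le_iff]
  intro i _
  simp [bot_eq_zeroΓ]

theorem vnrm_eq_zero_iff {x : Fin n → K} : vnrm A x = 0 ↔ x = 0 := by
  constructor
  · intro h
    funext i
    have h2 : A.valuation (x i) = 0 :=
      le_antisymm (h ▸ coord_le_vnrm A x i) zero_le'
    simpa using h2
  · rintro rfl; exact vnrm_zero A

theorem vnrm_pos {x : Fin n → K} (hx : x ≠ 0) : 0 < vnrm A x := by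
  rcases eq_or_ne (vnrm A x) 0 with h | h
  · exact absurd ((vnrm_eq_zero_iff A).1 h) hx
  · exact lt_of_le_of_ne zero_le' (Ne.symm h)

theorem vnrm_neg (x : Fin n → K) : vnrm A (-x) = vnrm A x := by
  rw [vnrm_def, vnrm_def]
  congr 1; funext i; simp

theorem vnrm_add_le (x y : Fin n → K) :
    vnrm A (x + y) ≤ max (vnrm A x) (vnrm A y) := by
  rw [vnrm_le_iff]
  intro i
  calc A.valuation (x i + y i) ≤ max (A.valuation (x i)) (A.valuation (y i)) :=
        Valuation.map_add _ _ _
    _ ≤ _ := max_le_max (coord_le_vnrm A x i) (coord_le_vnrm A y i)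

theorem vnrm_sub_le (x y : Fin n → K) :
    vnrm A (x - y) ≤ max (vnrm A x) (vnrm A y) := by
  have h := vnrm_add_le A x (-y)
  rw [vnrm_neg] at h
  rw [sub_eq_add_neg x y]
  exact h

theorem vnrm_smul (c : K) (x : Fin n → K) :
    vnrm A (c • x) = A.valuation c * vnrm A x := by
  rcases Nat.eq_zero_or_pos n with rfl | hn
  · rw [show x = 0 from funext fun i => absurd i.2 (by omega), smul_zero, vnrm_zero, mul_zero]
  · haveI : Nonempty (Fin n) := ⟨⟨0, hn⟩⟩
    obtain ⟨i, _, hi⟩ := Finset.exists_mem_eq_sup (Finset.univ : Finset (Fin n))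
      Finset.univ_nonempty fun i => A.valuation ((c • x) i)
    obtain ⟨j, _, hj⟩ := Finset.exists_mem_eq_sup (Finset.univ : Finset (Fin n))
      Finset.univ_nonempty fun i => A.valuation (x i)
    rw [vnrm_def, vnrm_def, hi, hj]
    apply le_antisymm
    · have : A.valuation ((c • x) i) = A.valuation c * A.valuation (x i) := by
        simp [Pi.smul_apply, smul_eq_mul, map_mul]
      rw [this]
      exact mul_le_mul_right (hj ▸ coord_le_vnrm A x i) _
    · have : A.valuation c * A.valuation (x j) = A.valuation ((c • x) j) := by
        simp [Pi.smul_apply, smul_eq_mul, map_mul]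
      rw [this]
      exact hi ▸ coord_le_vnrm A (c • x) j

theorem vnrm_add_eq_left {x y : Fin n → K} (h : vnrm A y < vnrm A x) :
    vnrm A (x + y) = vnrm A x := by
  apply le_antisymm
  · exact le_trans (vnrm_add_le A x y) (by simp [le_of_lt h])
  · by_contra hlt
    push_neg at hlt
    have : vnrm A x ≤ max (vnrm A (x + y)) (vnrm A y) := by
      have := vnrm_add_le A (x + y) (-y)
      simpa [vnrm_neg] using this
    rcases max_cases (vnrm A (x + y)) (vnrm A y) with ⟨he, _⟩ | ⟨he, _⟩ <;>
      rw [he] at this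
    · exact absurd this (not_le.2 hlt)
    · exact absurd this (not_le.2 h)

theorem vnrm_sub_rev (x y : Fin n → K) : vnrm A (x - y) = vnrm A (y - x) := by
  rw [← vnrm_neg A (x - y), neg_sub]




theorem ball_nonempty {B : Set (Fin n → K)} (hB : IsBall A B) : B.Nonempty :=
  hB.1.nonempty

/-- The workhorse ball lemma. -/
theorem ball_mem {B : Set (Fin n → K)} (hB : IsBall A B) {w a b z : Fin n → K}
    (hw : w ∈ B) (ha : a ∈ B) (hb : b ∈ B)
    (h : vnrm A (w - z) ≤ vnrm A (a - b)) : z ∈ B := by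
  have haz : vnrm A (a - z) ≤ max (vnrm A (a - w)) (vnrm A (a - b)) := by
    have : a - z = (a - w) + (w - z) := by ring
    rw [this]
    exact le_trans (vnrm_add_le A _ _) (max_le_max le_rfl h)
  rcases le_total (vnrm A (a - b)) (vnrm A (a - w)) with hc | hc
  · exact hB.2 a ha w hw z (le_trans haz (by simp [hc]))
  · exact hB.2 a ha b hb z (le_trans haz (by simp [hc]))

theorem riso_norm_eq {B : Set (Fin n → K)} {φ : (Fin n → K) → (Fin n → K)}
    (hφ : IsRisometryOn A φ B B) {x x' : Fin n → K} (hx : x ∈ B) (hx' : x' ∈ B) :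
    vnrm A (φ x - φ x') = vnrm A (x - x') := by
  rcases eq_or_ne x x' with rfl | hne
  · simp
  · have h := hφ.2 x hx x' hx' hne
    have : φ x - φ x' = (x - x') + (φ x - φ x' - (x - x')) := by ring
    rw [this]
    exact vnrm_add_eq_left A h

theorem IsRisometryOn.comp {B : Set (Fin n → K)} {φ g : (Fin n → K) → (Fin n → K)}
    (hφ : IsRisometryOn A φ B B) (hg : IsRisometryOn A g B B) :
    IsRisometryOn A (fun x => φ (g x)) B B := by
  refine ⟨Set.BijOn.comp hφ.1 hg.1, ?_⟩
  intro x hx x' hx' hne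
  have hgx : g x ∈ B := hg.1.1 hx
  have hgx' : g x' ∈ B := hg.1.1 hx'
  have hgne : g x ≠ g x' := fun h => hne (hg.1.2.1 hx hx' h)
  have e : φ (g x) - φ (g x') - (x - x') =
      (φ (g x) - φ (g x') - (g x - g x')) + (g x - g x' - (x - x')) := by ring
  rw [e]
  refine lt_of_le_of_lt (vnrm_add_le A _ _) (max_lt ?_ (hg.2 x hx x' hx' hne))
  have := hφ.2 _ hgx _ hgx' hgne
  rwa [riso_norm_eq A hg hx hx'] at this

theorem riso_inv {B : Set (Fin n → K)} {φ : (Fin n → K) → (Fin n → K)}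
    (hφ : IsRisometryOn A φ B B) :
    ∃ ψ : (Fin n → K) → (Fin n → K), IsRisometryOn A ψ B B ∧
      (∀ x ∈ B, φ (ψ x) = x) ∧ (∀ x ∈ B, ψ (φ x) = x) := by
  classical
  set ψ := Function.invFunOn φ B with hψ
  have hinv : Set.InvOn ψ φ B B := hφ.1.invOn_invFunOn
  have hbij : Set.BijOn ψ B B := Set.BijOn.symm hinv.symm hφ.1
  refine ⟨ψ, ⟨hbij, ?_⟩, fun x hx => hinv.2 hx, fun x hx => hinv.1 hx⟩
  intro y hy y' hy' hne
  have hx : ψ y ∈ B := hbij.1 hy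
  have hx' : ψ y' ∈ B := hbij.1 hy'
  have hxy : φ (ψ y) = y := hinv.2 hy
  have hxy' : φ (ψ y') = y' := hinv.2 hy'
  have hne' : ψ y ≠ ψ y' := by
    intro h; exact hne (by rw [← hxy, ← hxy', h])
  have h := hφ.2 _ hx _ hx' hne'
  rw [hxy, hxy'] at h
  have e : ψ y - ψ y' - (y - y') = -(y - y' - (ψ y - ψ y')) := by ring
  rw [e, vnrm_neg]
  have hnrm : vnrm A (ψ y - ψ y') = vnrm A (y - y') := by
    have h2 := riso_norm_eq A hφ hx hx'
    rw [hxy, hxy'] at h2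
    exact h2.symm
  rw [← hnrm]
  exact h

-- resVec lemmas
theorem resVec_apply (x : Fin n → K) (h : ∀ i, x i ∈ A) (i : Fin n) :
    resVec A x i = IsLocalRing.residue A ⟨x i, h i⟩ := by
  simp [resVec, h i]

theorem resVec_add (x y : Fin n → K) (hx : ∀ i, x i ∈ A) (hy : ∀ i, y i ∈ A) :
    resVec A (x + y) = resVec A x + resVec A y := by
  funext i
  have hxy : ∀ i, (x + y) i ∈ A := fun i => add_mem (hx i) (hy i)
  rw [Pi.add_apply, resVec_apply A _ hxy, resVec_apply A _ hx, resVec_apply A _ hy]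
  rw [show (⟨(x + y) i, hxy i⟩ : A) = ⟨x i, hx i⟩ + ⟨y i, hy i⟩ from rfl]
  exact map_add _ _ _

theorem resVec_smul (c : K) (hc : c ∈ A) (x : Fin n → K) (hx : ∀ i, x i ∈ A) :
    resVec A (c • x) = IsLocalRing.residue A ⟨c, hc⟩ • resVec A x := by
  funext i
  have hcx : ∀ i, (c • x) i ∈ A := fun i => mul_mem hc (hx i)
  have e1 : resVec A (c • x) i = IsLocalRing.residue A (⟨c, hc⟩ * ⟨x i, hx i⟩) := by
    rw [resVec_apply A _ hcx i]
    exact congrArg _ (Subtype.ext rfl)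
  rw [e1, map_mul, Pi.smul_apply, resVec_apply A _ hx, smul_eq_mul]

theorem resVec_eq_zero (x : Fin n → K) (hx : ∀ i, x i ∈ A) (h : vnrm A x < 1) :
    resVec A x = 0 := by
  funext i
  rw [resVec_apply A x hx]
  have hv : A.valuation (x i) < 1 := lt_of_le_of_lt (coord_le_vnrm A x i) h
  have hm : (⟨x i, hx i⟩ : A) ∈ IsLocalRing.maximalIdeal A :=
    (ValuationSubring.valuation_lt_one_iff A _).2 hv
  show IsLocalRing.residue A _ = 0
  exact Ideal.Quotient.eq_zero_iff_mem.2 hm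

theorem mem_A_of_vnrm_le_one {x : Fin n → K} (h : vnrm A x ≤ 1) (i : Fin n) :
    x i ∈ A :=
  ValuationSubring.mem_of_valuation_le_one A _ (le_trans (coord_le_vnrm A x i) h)

theorem vnrm_le_one_of_mem {x : Fin n → K} (h : ∀ i, x i ∈ A) : vnrm A x ≤ 1 :=
  (vnrm_le_iff A).2 fun i => A.valuation_le_one ⟨x i, h i⟩



variable {ι : Type*} [Fintype ι]

theorem resVec_zero : resVec A (0 : Fin n → K) = 0 := by
  funext i
  have h : ∀ i, (0 : Fin n → K) i ∈ A := fun _ => zero_mem _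
  rw [resVec_apply A _ h]
  show IsLocalRing.residue A 0 = 0
  exact map_zero _

theorem resVec_sum (t : Finset ι) (lam : ι → A) (u : ι → (Fin n → K))
    (hu : ∀ i j, u i j ∈ A) :
    (∀ j, (∑ i ∈ t, (lam i : K) • u i) j ∈ A) ∧
      resVec A (∑ i ∈ t, (lam i : K) • u i) =
        ∑ i ∈ t, IsLocalRing.residue A (lam i) • resVec A (u i) := by
  classical
  induction t using Finset.cons_induction with
  | empty => exact ⟨fun _ => by simp, by simpa using resVec_zero A⟩
  | cons a t ha ih =>
    have hterm : ∀ j, ((lam a : K) • u a) j ∈ A := fun j => mul_mem (lam a).2 (hu a j)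
    have hmem : ∀ j, (∑ i ∈ Finset.cons a t ha, (lam i : K) • u i) j ∈ A := by
      intro j
      rw [Finset.sum_cons]
      exact add_mem (hterm j) (ih.1 j)
    refine ⟨hmem, ?_⟩
    rw [Finset.sum_cons, Finset.sum_cons, resVec_add A _ _ hterm ih.1,
      resVec_smul A _ (lam a).2 _ (hu a), ih.2]

theorem vnrm_sum_le (t : Finset ι) (y : ι → (Fin n → K)) {γ : A.ValueGroup}
    (h : ∀ i ∈ t, vnrm A (y i) ≤ γ) : vnrm A (∑ i ∈ t, y i) ≤ γ := by
  classical
  induction t using Finset.cons_induction with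
  | empty => simpa [vnrm_zero] using zero_le'
  | cons a t ha ih =>
    rw [Finset.sum_cons]
    refine le_trans (vnrm_add_le A _ _) (max_le (h a (Finset.mem_cons_self a _)) ?_)
    exact ih fun i hi => h i (Finset.mem_cons_of_mem hi)

theorem vnrm_smul_le (c : K) {u : Fin n → K} (hu : ∀ j, u j ∈ A) :
    vnrm A (c • u) ≤ A.valuation c := by
  rw [vnrm_smul]
  calc A.valuation c * vnrm A u ≤ A.valuation c * 1 :=
        mul_le_mul_right (vnrm_le_one_of_mem A hu) _
    _ = A.valuation c := mul_one _

/-- The master lemma: coefficients are bounded by the norm of the combination,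
for a family with linearly independent residues. -/
theorem master_le (u : ι → (Fin n → K)) (hu : ∀ i j, u i j ∈ A)
    (hind : LinearIndependent (IsLocalRing.ResidueField A) fun i => resVec A (u i))
    (lam : ι → K) (i₀ : ι) :
    A.valuation (lam i₀) ≤ vnrm A (∑ i, lam i • u i) := by
  classical
  by_cases h0 : lam i₀ = 0
  · simpa [h0] using zero_le'
  haveI : Nonempty ι := ⟨i₀⟩
  obtain ⟨j, -, hj⟩ := Finset.exists_mem_eq_sup' (Finset.univ_nonempty (α := ι))
    fun i => A.valuation (lam i)
  have hji : ∀ i, A.valuation (lam i) ≤ A.valuation (lam j) := fun i => by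
    rw [← hj]
    exact Finset.le_sup' (f := fun i => A.valuation (lam i)) (Finset.mem_univ i)
  have hjne : A.valuation (lam j) ≠ 0 := by
    intro h
    exact h0 ((Valuation.zero_iff _).1 (le_antisymm (h ▸ hji i₀) zero_le'))
  have hjne' : lam j ≠ 0 := fun h => hjne (by simp [h])
  set μ : ι → A := fun i => ⟨lam i / lam j,
    ValuationSubring.mem_of_valuation_le_one A _ (by
      rw [map_div₀]
      exact div_le_one_of_le₀ (hji i) zero_le')⟩ with hμ
  set y : Fin n → K := ∑ i, (μ i : K) • u i with hy
  have hkey : ∑ i, lam i • u i = lam j • y := by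
    rw [hy, Finset.smul_sum]
    refine Finset.sum_congr rfl fun i _ => ?_
    rw [smul_smul]
    congr 1
    show lam i = lam j * (lam i / lam j)
    rw [mul_comm, div_mul_cancel₀ _ hjne']
  have hμj : μ j = 1 := by
    apply Subtype.ext
    show lam j / lam j = (1 : K)
    exact div_self hjne'
  have hy1 : (1 : A.ValueGroup) ≤ vnrm A y := by
    by_contra hlt
    push_neg at hlt
    have h1 := resVec_sum A Finset.univ μ u hu
    have hz : resVec A y = 0 := resVec_eq_zero A y h1.1 hlt
    rw [h1.2] at hz
    have := (Fintype.linearIndependent_iff.1 hind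
      (fun i => IsLocalRing.residue A (μ i)) hz) j
    rw [hμj] at this
    simp at this
  rw [hkey, vnrm_smul]
  calc A.valuation (lam i₀) ≤ A.valuation (lam j) := hji i₀
    _ = A.valuation (lam j) * 1 := (mul_one _).symm
    _ ≤ A.valuation (lam j) * vnrm A y := mul_le_mul_right hy1 _





local notation "RF" => IsLocalRing.ResidueField A

theorem IsLift.exists_lift {V : Submodule K (Fin n → K)}
    {Vb : Submodule RF (Fin n → RF)} (h : IsLift A V Vb)
    {yb : Fin n → RF} (hy : yb ∈ Vb) :
    ∃ x ∈ V, (∀ i, x i ∈ A) ∧ resVec A x = yb :=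
  (Set.ext_iff.1 h yb).2 hy

theorem resVec_surj (yb : Fin n → RF) :
    ∃ x : Fin n → K, (∀ i, x i ∈ A) ∧ resVec A x = yb := by
  have h : ∀ i, ∃ a : A, IsLocalRing.residue A a = yb i := fun i =>
    Ideal.Quotient.mk_surjective (yb i)
  choose t ht using h
  refine ⟨fun i => (t i : K), fun i => (t i).2, ?_⟩
  funext i
  rw [resVec_apply A _ (fun i => (t i).2) i]
  rw [show (⟨(t i : K), (t i).2⟩ : A) = t i from Subtype.ext rfl]
  exact ht i

/-- Construction of a good residue basis with compatible lifts. -/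
theorem exists_good_family
    (V₁ V₂ : Submodule K (Fin n → K))
    (Vb1 Vb2 : Submodule RF (Fin n → RF))
    (hL1 : IsLift A V₁ Vb1) (hL2 : IsLift A V₂ Vb2) :
    ∃ (ℓ : Fin n → (Fin n → K)) (T1 T2 : Set (Fin n)),
      (∀ i j, ℓ i j ∈ A) ∧
      LinearIndependent RF (fun i => resVec A (ℓ i)) ∧
      Submodule.span RF (Set.range fun i => resVec A (ℓ i)) = ⊤ ∧
      Disjoint T1 T2 ∧
      (∀ i ∈ T1, ℓ i ∈ V₁) ∧ (∀ i ∈ T2, ℓ i ∈ V₂) ∧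
      Submodule.span RF ((fun i => resVec A (ℓ i)) '' (T1 ∪ T2)) = Vb1 ⊔ Vb2 ∧
      Submodule.span RF ((fun i => resVec A (ℓ i)) '' T2) = Vb2 := by
  classical
  set M := Fin n → RF
  -- basis of the intersection
  obtain ⟨sI, hsIsub, hsIspan, hsIind⟩ :=
    exists_linearIndependent RF ((Vb1 ⊓ Vb2 : Submodule RF M) : Set M)
  rw [Submodule.span_eq] at hsIspan
  -- extend inside Vb1
  obtain ⟨s1, hs1sub, hsIs1, hs1sp, hs1ind⟩ : ∃ b ⊆ (Vb1 : Set M), sI ⊆ b ∧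
      (Vb1 : Set M) ⊆ Submodule.span RF b ∧ LinearIndependent RF ((↑) : b → M) :=
    exists_linearIndepOn_id_extension hsIind
      (hsIsub.trans (Set.inter_subset_left (t := (Vb2 : Set M))))
  have hs1span : Submodule.span RF s1 = Vb1 := by
    apply le_antisymm
    · rw [Submodule.span_le]; exact hs1sub
    · intro x hx; exact hs1sp hx
  -- basis of Vb2
  obtain ⟨s2, hs2sub, hs2span, hs2ind⟩ :=
    exists_linearIndependent RF ((Vb2 : Submodule RF M) : Set M)
  rw [Submodule.span_eq] at hs2span
  -- span disjointness
  have hC1 : Submodule.span RF (s1 \ sI) ≤ Vb1 := by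
    rw [Submodule.span_le]; exact (Set.diff_subset).trans hs1sub
  have hCI : Disjoint (Submodule.span RF (s1 \ sI)) (Submodule.span RF sI) := by
    have h1 : ((↑) : s1 → M) '' {x : s1 | (x : M) ∈ s1 \ sI} = s1 \ sI :=
      Subtype.coe_image_of_subset Set.diff_subset
    have h2 : ((↑) : s1 → M) '' {x : s1 | (x : M) ∈ sI} = sI :=
      Subtype.coe_image_of_subset hsIs1
    have := hs1ind.disjoint_span_image (s := {x : s1 | (x : M) ∈ s1 \ sI})
      (t := {x : s1 | (x : M) ∈ sI}) (by
        rw [Set.disjoint_left]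
        rintro ⟨a, ha⟩ h1' h2'
        exact (h1'.2 : a ∉ sI) h2')
    rwa [h1, h2] at this
  have hCV2 : Disjoint (Submodule.span RF (s1 \ sI)) Vb2 := by
    rw [disjoint_iff]
    rw [disjoint_iff] at hCI
    apply le_antisymm _ bot_le
    intro x hx
    have hx1 : x ∈ Vb1 ⊓ Vb2 := ⟨hC1 hx.1, hx.2⟩
    have : x ∈ Submodule.span RF (s1 \ sI) ⊓ Submodule.span RF sI := by
      refine ⟨hx.1, ?_⟩
      rw [hsIspan]; exact hx1
    rwa [hCI] at this
  -- independence of the union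
  have hs0ind : LinearIndependent RF
      (fun x => x : ((s1 \ sI) ∪ s2 : Set M) → M) := by
    refine LinearIndepOn.id_union (LinearIndepOn.mono (v := id) hs1ind Set.diff_subset) hs2ind ?_
    rwa [hs2span]
  -- set disjointness
  have hdisj0 : (s1 \ sI) ∩ s2 = ∅ := by
    by_contra h
    obtain ⟨x, hx1, hx2⟩ := Set.nonempty_iff_ne_empty.2 h
    have hx0 : x ∈ (⊥ : Submodule RF M) := by
      rw [← disjoint_iff.1 hCV2]
      exact ⟨Submodule.subset_span hx1, hs2sub hx2⟩
    have : x ≠ 0 := hs2ind.ne_zero ⟨x, hx2⟩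
    exact this (by simpa using hx0)
  -- extend to a basis of the whole space
  obtain ⟨s, -, hs0s, hssp, hsind⟩ : ∃ b ⊆ (Set.univ : Set M), ((s1 \ sI) ∪ s2) ⊆ b ∧
      (Set.univ : Set M) ⊆ Submodule.span RF b ∧ LinearIndependent RF ((↑) : b → M) :=
    exists_linearIndepOn_id_extension hs0ind (Set.subset_univ _)
  have hsspan : Submodule.span RF s = ⊤ := by
    refine le_antisymm le_top fun x _ => hssp (Set.mem_univ x)
  -- s is finite of cardinality n
  have hsfin : s.Finite := hsind.setFinite
  haveI := hsfin.fintype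
  have hbs : Module.Basis s RF M := Module.Basis.mk hsind (by
    rw [Subtype.range_coe]
    rw [hsspan])
  have hcard : Fintype.card s = n := by
    have h1 := Module.finrank_eq_card_basis hbs
    have h2 : Module.finrank RF M = n := by
      simp [M, Module.finrank_pi]
    omega
  obtain ⟨e⟩ : Nonempty (s ≃ Fin n) := ⟨Fintype.equivFinOfCardEq hcard⟩
  -- the lift function on s
  have hlift : ∀ i : s, ∃ x : Fin n → K, (∀ j, x j ∈ A) ∧ resVec A x = (i : M) ∧
      ((i : M) ∈ s2 → x ∈ V₂) ∧ ((i : M) ∈ s1 \ sI ∧ (i : M) ∉ s2 → x ∈ V₁) := by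
    intro i
    by_cases h2 : (i : M) ∈ s2
    · obtain ⟨x, hxV, hxA, hxr⟩ := IsLift.exists_lift A hL2 (hs2sub h2)
      exact ⟨x, hxA, hxr, fun _ => hxV, fun h => absurd h2 h.2⟩
    · by_cases h1 : (i : M) ∈ s1 \ sI
      · obtain ⟨x, hxV, hxA, hxr⟩ := IsLift.exists_lift A hL1 (hs1sub h1.1)
        exact ⟨x, hxA, hxr, fun h => absurd h h2, fun _ => hxV⟩
      · obtain ⟨x, hxA, hxr⟩ := resVec_surj A (i : M)
        exact ⟨x, hxA, hxr, fun h => absurd h h2, fun h => absurd h.1 h1⟩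
  choose L hLA hLr hLV2 hLV1 using hlift
  refine ⟨fun k => L (e.symm k), {k | ((e.symm k : M) ∈ s1 \ sI)},
    {k | ((e.symm k : M) ∈ s2)}, fun i j => hLA _ j, ?_, ?_, ?_, ?_, ?_, ?_, ?_⟩
  · have : (fun k => resVec A (L (e.symm k))) = fun k => ((e.symm k : M)) := by
      funext k; exact hLr _
    rw [this]
    exact hsind.comp e.symm e.symm.injective
  · have : (fun k => resVec A (L (e.symm k))) = fun k => ((e.symm k : M)) := by
      funext k; exact hLr _
    rw [this]
    have : Set.range (fun k => ((e.symm k : M))) = s := by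
      ext x
      constructor
      · rintro ⟨k, rfl⟩; exact (e.symm k).2
      · intro hx; exact ⟨e ⟨x, hx⟩, by simp⟩
    rw [this, hsspan]
  · rw [Set.disjoint_left]
    intro k hk1 hk2
    have : (e.symm k : M) ∈ (s1 \ sI) ∩ s2 := ⟨hk1, hk2⟩
    rw [hdisj0] at this
    exact this
  · intro k hk
    refine hLV1 _ ⟨hk, ?_⟩
    intro h2
    have : (e.symm k : M) ∈ (s1 \ sI) ∩ s2 := ⟨hk, h2⟩
    rw [hdisj0] at this
    exact this
  · intro k hk; exact hLV2 _ hk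
  · have him : (fun k => resVec A (L (e.symm k))) ''
        ({k | ((e.symm k : M) ∈ s1 \ sI)} ∪ {k | ((e.symm k : M) ∈ s2)}) =
        (s1 \ sI) ∪ s2 := by
      ext x
      constructor
      · rintro ⟨k, hk, rfl⟩
        show resVec A (L (e.symm k)) ∈ _
        rw [hLr (e.symm k)]
        exact hk
      · intro hx
        have hxs : x ∈ s := hs0s hx
        refine ⟨e ⟨x, hxs⟩, ?_, ?_⟩
        · simp only [Set.mem_union, Set.mem_setOf_eq, Equiv.symm_apply_apply]
          simpa using hx
        · show resVec A (L (e.symm (e ⟨x, hxs⟩))) = x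
          rw [hLr]; simp
    rw [him, Submodule.span_union, hs2span]
    have hsub' : s1 ⊆ (s1 \ sI) ∪ sI := by
      intro x hx
      by_cases h : x ∈ sI
      · exact Or.inr h
      · exact Or.inl ⟨hx, h⟩
    apply le_antisymm
    · exact sup_le (le_trans hC1 le_sup_left) le_sup_right
    · refine sup_le ?_ le_sup_right
      rw [← hs1span]
      refine le_trans (Submodule.span_mono hsub') ?_
      rw [Submodule.span_union]
      refine sup_le le_sup_left ?_
      rw [hsIspan]
      exact le_trans inf_le_right le_sup_right
  · have him : (fun k => resVec A (L (e.symm k))) '' {k | ((e.symm k : M) ∈ s2)}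
        = s2 := by
      ext x
      constructor
      · rintro ⟨k, hk, rfl⟩
        show resVec A (L (e.symm k)) ∈ _
        rw [hLr (e.symm k)]
        exact hk
      · intro hx
        have hxs : x ∈ s := hs0s (Or.inr hx)
        refine ⟨e ⟨x, hxs⟩, ?_, ?_⟩
        · simp only [Set.mem_setOf_eq, Equiv.symm_apply_apply]
          exact hx
        · show resVec A (L (e.symm (e ⟨x, hxs⟩))) = x
          rw [hLr]; simp
    rw [him, hs2span]





section Geometry

variable (ℓ : Fin n → (Fin n → K))

theorem ell_lin_indep (hu : ∀ i j, ℓ i j ∈ A)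
    (hind : LinearIndependent RF fun i => resVec A (ℓ i)) :
    LinearIndependent K ℓ := by
  rw [Fintype.linearIndependent_iff]
  intro g hg i
  have h := master_le A ℓ hu hind g i
  rw [hg, vnrm_zero] at h
  have : A.valuation (g i) = 0 := le_antisymm h zero_le'
  exact (Valuation.zero_iff _).1 this

theorem ell_span (hu : ∀ i j, ℓ i j ∈ A)
    (hind : LinearIndependent RF fun i => resVec A (ℓ i)) :
    Submodule.span K (Set.range ℓ) = ⊤ := by
  rcases Nat.eq_zero_or_pos n with hn | hn
  · apply Submodule.eq_top_iff'.2
    intro x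
    have : x = 0 := funext fun i => absurd i.2 (by omega)
    simp [this]
  · haveI : Nonempty (Fin n) := ⟨⟨0, hn⟩⟩
    refine LinearIndependent.span_eq_top_of_card_eq_finrank
      (ell_lin_indep A ℓ hu hind) ?_
    simp [Module.finrank_pi]

/-- Coefficient bound for the basis `b` whose vectors are `ℓ`. -/
theorem repr_le (hu : ∀ i j, ℓ i j ∈ A)
    (hind : LinearIndependent RF fun i => resVec A (ℓ i))
    (b : Module.Basis (Fin n) K (Fin n → K)) (hb : ∀ i, b i = ℓ i)
    (z : Fin n → K) (i : Fin n) : A.valuation (b.repr z i) ≤ vnrm A z := by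
  have h := master_le A ℓ hu hind (fun i => b.repr z i) i
  have hz : ∑ j, b.repr z j • ℓ j = z := by
    rw [show (fun j => b.repr z j • ℓ j) = fun j => b.repr z j • b j by
      funext j; rw [hb j]]
    exact b.sum_repr z
  rwa [hz] at h

/-- The span of a subfamily of lifts is a lift of the span of residues. -/
theorem lift_span (hu : ∀ i j, ℓ i j ∈ A)
    (hind : LinearIndependent RF fun i => resVec A (ℓ i))
    (b : Module.Basis (Fin n) K (Fin n → K)) (hb : ∀ i, b i = ℓ i)
    (bR : Module.Basis (Fin n) RF (Fin n → RF)) (hbR : ∀ i, bR i = resVec A (ℓ i))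
    (T : Set (Fin n)) :
    IsLift A (Submodule.span K (ℓ '' T))
      (Submodule.span RF ((fun i => resVec A (ℓ i)) '' T)) := by
  classical
  have hbim : ⇑b '' T = ℓ '' T := by
    apply Set.image_congr
    intro i _; exact hb i
  have hbRim : ⇑bR '' T = (fun i => resVec A (ℓ i)) '' T := by
    apply Set.image_congr
    intro i _; exact hbR i
  apply Set.ext
  intro yb
  constructor
  · rintro ⟨x, hxV, hxA, rfl⟩
    rw [← hbim] at hxV
    have hsupp := Module.Basis.repr_support_subset_of_mem_span b T hxV
    have hco : ∀ i, b.repr x i ∈ A := fun i =>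
      ValuationSubring.mem_of_valuation_le_one A _
        (le_trans (repr_le A ℓ hu hind b hb x i) (vnrm_le_one_of_mem A hxA))
    set lam : Fin n → A := fun i => ⟨b.repr x i, hco i⟩ with hlam
    have hx : x = ∑ i, (lam i : K) • ℓ i := by
      rw [show (fun i => (lam i : K) • ℓ i) = fun i => b.repr x i • b i by
        funext i; rw [hb i]]
      exact (b.sum_repr x).symm
    rw [hx, (resVec_sum A Finset.univ lam ℓ hu).2]
    apply Submodule.sum_mem
    intro i _
    by_cases hiT : i ∈ T
    · exact Submodule.smul_mem _ _ (Submodule.subset_span ⟨i, hiT, rfl⟩)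
    · have h0 : b.repr x i = 0 := by
        by_contra h
        exact hiT (hsupp (by simpa using Finsupp.mem_support_iff.2 h))
      have : lam i = 0 := Subtype.ext h0
      rw [this]
      simp
  · intro hyb
    rw [← hbRim] at hyb
    have hsupp := Module.Basis.repr_support_subset_of_mem_span bR T hyb
    have hchoose : ∀ i, ∃ a : A, IsLocalRing.residue A a = bR.repr yb i := fun i =>
      Ideal.Quotient.mk_surjective _
    choose c hc using hchoose
    set lam : Fin n → A := fun i => if i ∈ T then c i else 0 with hlamdef
    refine ⟨∑ i, (lam i : K) • ℓ i, ?_, (resVec_sum A Finset.univ lam ℓ hu).1, ?_⟩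
    · apply Submodule.sum_mem
      intro i _
      by_cases hiT : i ∈ T
      · exact Submodule.smul_mem _ _ (Submodule.subset_span ⟨i, hiT, rfl⟩)
      · have : lam i = 0 := by simp [hlamdef, hiT]
        rw [this]
        simp
    · rw [(resVec_sum A Finset.univ lam ℓ hu).2]
      have : ∀ i, IsLocalRing.residue A (lam i) • resVec A (ℓ i)
          = bR.repr yb i • bR i := by
        intro i
        rw [hbR i]
        congr 1
        by_cases hiT : i ∈ T
        · rw [show lam i = c i by simp [hlamdef, hiT]]
          exact hc i
        · have h1 : lam i = 0 := by simp [hlamdef, hiT]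
          have h2 : bR.repr yb i = 0 := by
            by_contra h
            exact hiT (hsupp (by simpa using Finsupp.mem_support_iff.2 h))
          rw [h1, h2, map_zero]
      rw [show (fun i => IsLocalRing.residue A (lam i) • resVec A (ℓ i))
          = fun i => bR.repr yb i • bR i from funext this]
      exact bR.sum_repr yb

noncomputable def projAway (b : Module.Basis (Fin n) K (Fin n → K)) (T : Set (Fin n)) :
    (Fin n → K) →ₗ[K] (Fin n → K) :=
  Module.Basis.constr (M' := Fin n → K) b K fun i => if i ∈ T then 0 else b i

theorem projAway_apply (b : Module.Basis (Fin n) K (Fin n → K)) (T : Set (Fin n))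
    (z : Fin n → K) :
    projAway b T z = ∑ i, (if i ∈ T then 0 else b.repr z i) • b i := by
  classical
  conv_lhs => rw [← b.sum_repr z]
  rw [map_sum]
  refine Finset.sum_congr rfl fun i _ => ?_
  rw [map_smul]
  rw [show (projAway b T) (b i) = if i ∈ T then 0 else b i from
    Module.Basis.constr_basis b K _ i]
  by_cases hiT : i ∈ T <;> simp [hiT]

theorem projAway_mem_W (ℓ : Fin n → (Fin n → K))
    (b : Module.Basis (Fin n) K (Fin n → K)) (hb : ∀ i, b i = ℓ i)
    (T : Set (Fin n)) (z : Fin n → K) :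
    projAway b T z ∈ Submodule.span K (ℓ '' Tᶜ) := by
  classical
  rw [projAway_apply]
  apply Submodule.sum_mem
  intro i _
  by_cases hiT : i ∈ T
  · simp [hiT]
  · refine Submodule.smul_mem _ _ (Submodule.subset_span ⟨i, hiT, (hb i).symm⟩)

theorem projAway_fix (ℓ : Fin n → (Fin n → K))
    (b : Module.Basis (Fin n) K (Fin n → K)) (hb : ∀ i, b i = ℓ i)
    (T : Set (Fin n)) {z : Fin n → K}
    (hz : z ∈ Submodule.span K (ℓ '' Tᶜ)) : projAway b T z = z := by
  classical
  induction hz using Submodule.span_induction with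
  | mem x hx =>
    obtain ⟨i, hi, rfl⟩ := hx
    rw [← hb i]
    rw [show (projAway b T) (b i) = if i ∈ T then 0 else b i from
      Module.Basis.constr_basis b K _ i]
    rw [if_neg (by simpa using hi)]
  | zero => simp
  | add x y _ _ hx hy => rw [map_add, hx, hy]
  | smul c x _ hx => rw [map_smul, hx]

theorem projAway_kill (ℓ : Fin n → (Fin n → K))
    (b : Module.Basis (Fin n) K (Fin n → K)) (hb : ∀ i, b i = ℓ i)
    (T : Set (Fin n)) {z : Fin n → K}
    (hz : z ∈ Submodule.span K (ℓ '' T)) : projAway b T z = 0 := by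
  classical
  induction hz using Submodule.span_induction with
  | mem x hx =>
    obtain ⟨i, hi, rfl⟩ := hx
    rw [← hb i]
    rw [show (projAway b T) (b i) = if i ∈ T then 0 else b i from
      Module.Basis.constr_basis b K _ i]
    simp [hi]
  | zero => simp
  | add x y _ _ hx hy => rw [map_add, hx, hy, add_zero]
  | smul c x _ hx => rw [map_smul, hx, smul_zero]

theorem projAway_norm_le (ℓ : Fin n → (Fin n → K)) (hu : ∀ i j, ℓ i j ∈ A)
    (hind : LinearIndependent RF fun i => resVec A (ℓ i))
    (b : Module.Basis (Fin n) K (Fin n → K)) (hb : ∀ i, b i = ℓ i)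
    (T : Set (Fin n)) (z : Fin n → K) :
    vnrm A (projAway b T z) ≤ vnrm A z := by
  classical
  rw [projAway_apply]
  apply vnrm_sum_le
  intro i _
  by_cases hiT : i ∈ T
  · simp [hiT, vnrm_zero]
  · simp only [hiT, if_false]
    rw [hb i]
    exact le_trans (vnrm_smul_le A _ (hu i)) (repr_le A ℓ hu hind b hb z i)

theorem projAway_diff_mem (ℓ : Fin n → (Fin n → K))
    (b : Module.Basis (Fin n) K (Fin n → K)) (hb : ∀ i, b i = ℓ i)
    (T : Set (Fin n)) (z : Fin n → K) :
    z - projAway b T z ∈ Submodule.span K (ℓ '' T) := by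
  classical
  have hterm : ∀ i, b.repr z i • b i - (if i ∈ T then 0 else b.repr z i) • b i
      = (if i ∈ T then b.repr z i else 0) • b i := by
    intro i
    by_cases hiT : i ∈ T <;> simp [hiT]
  have e : z - projAway b T z = ∑ i, (if i ∈ T then b.repr z i else 0) • b i := by
    have h1 : z - projAway b T z
        = (∑ i, b.repr z i • b i) - ∑ i, (if i ∈ T then 0 else b.repr z i) • b i := by
      rw [b.sum_repr z, ← projAway_apply]
    rw [h1, ← Finset.sum_sub_distrib]
    exact Finset.sum_congr rfl fun i _ => hterm i
  rw [e]
  apply Submodule.sum_mem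
  intro i _
  by_cases hiT : i ∈ T
  · exact Submodule.smul_mem _ _ (Submodule.subset_span ⟨i, hiT, (hb i).symm⟩)
  · simp [hiT]

end Geometry





theorem vnrm_attain (hn : 0 < n) (x : Fin n → K) :
    ∃ i, vnrm A x = A.valuation (x i) := by
  haveI : Nonempty (Fin n) := ⟨⟨0, hn⟩⟩
  obtain ⟨i, _, hi⟩ := Finset.exists_mem_eq_sup (Finset.univ : Finset (Fin n))
    Finset.univ_nonempty fun i => A.valuation (x i)
  exact ⟨i, hi⟩

theorem int_val_le_one (m : ℤ) : A.valuation (m : K) ≤ 1 := by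
  have hmem : (m : K) ∈ A.toSubring := intCast_mem A.toSubring m
  exact A.valuation_le_one ⟨(m : K), hmem⟩

theorem closedBall1_isBall1 [CharZero K] (c : K) {r : A.ValueGroup} {k : K}
    (hk : k ≠ 0) (hkr : A.valuation k = r) :
    IsBall1 A {t : K | A.valuation (t - c) ≤ r} := by
  constructor
  · refine Set.infinite_of_injective_forall_mem
      (f := fun m : ℤ => c + k * (m : K)) ?_ ?_
    · intro m m' h
      have h2 : k * (m : K) = k * (m' : K) := by
        have := add_left_cancel h
        exact this
      have h3 : (m : K) = (m' : K) := mul_left_cancel₀ hk h2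
      exact_mod_cast h3
    · intro m
      show A.valuation (c + k * (m : K) - c) ≤ r
      rw [add_sub_cancel_left, map_mul, hkr]
      calc r * A.valuation (m : K) ≤ r * 1 := mul_le_mul_right (int_val_le_one A m) r
        _ = r := mul_one r
  · intro x hx x' hx' y hy
    have h1 : A.valuation (x - x') ≤ r := by
      have : x - x' = (x - c) - (x' - c) := by ring
      rw [this]
      refine le_trans (Valuation.map_sub _ _ _) (max_le hx hx')
    have h2 : A.valuation (y - c) ≤ max (A.valuation (y - x)) (A.valuation (x - c)) := by
      have : y - c = (y - x) + (x - c) := by ring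
      rw [this]
      exact Valuation.map_add _ _ _
    have h3 : A.valuation (y - x) ≤ r := by
      rw [show y - x = -(x - y) by ring, Valuation.map_neg]
      exact le_trans hy h1
    exact le_trans h2 (max_le h3 hx)

/-- Chains of closed balls in `Kⁿ` have nonempty intersection. -/
theorem chain_balls_inter [CharZero K] (hsph : SphericallyComplete A) (hn : 0 < n)
    (J : Set ((Fin n → K) × A.ValueGroup)) (hJne : J.Nonempty)
    (hrval : ∀ p ∈ J, ∃ k : K, k ≠ 0 ∧ A.valuation k = p.2)
    (hchain : ∀ p ∈ J, ∀ q ∈ J,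
      (vnrm A (p.1 - q.1) ≤ q.2 ∧ p.2 ≤ q.2) ∨
      (vnrm A (q.1 - p.1) ≤ p.2 ∧ q.2 ≤ p.2)) :
    ∃ z : Fin n → K, ∀ p ∈ J, vnrm A (z - p.1) ≤ p.2 := by
  classical
  have hcoord : ∀ j : Fin n, ∃ zj : K, ∀ p ∈ J, A.valuation (zj - p.1 j) ≤ p.2 := by
    intro j
    set Cj : Set (Set K) := (fun p : (Fin n → K) × A.ValueGroup =>
      {t : K | A.valuation (t - p.1 j) ≤ p.2}) '' J with hCj
    have h1 : Cj.Nonempty := hJne.image _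
    have h2 : ∀ D ∈ Cj, IsBall1 A D := by
      rintro D ⟨p, hp, rfl⟩
      obtain ⟨k, hk, hkr⟩ := hrval p hp
      exact closedBall1_isBall1 A _ hk hkr
    have h3 : IsChain (· ⊆ ·) Cj := by
      rintro D ⟨p, hp, rfl⟩ E ⟨q, hq, rfl⟩ -
      have key : ∀ a b : (Fin n → K) × A.ValueGroup,
          vnrm A (a.1 - b.1) ≤ b.2 → a.2 ≤ b.2 →
          {t : K | A.valuation (t - a.1 j) ≤ a.2} ⊆
            {t : K | A.valuation (t - b.1 j) ≤ b.2} := by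
        intro a b hab hr t ht
        have : A.valuation (t - b.1 j) ≤
            max (A.valuation (t - a.1 j)) (A.valuation (a.1 j - b.1 j)) := by
          rw [show t - b.1 j = (t - a.1 j) + (a.1 j - b.1 j) by ring]
          exact Valuation.map_add _ _ _
        refine le_trans this (max_le (le_trans ht hr) ?_)
        exact le_trans (coord_le_vnrm A (a.1 - b.1) j) hab
      rcases hchain p hp q hq with ⟨h, hr⟩ | ⟨h, hr⟩
      · exact Or.inl (key p q h hr)
      · exact Or.inr (key q p h hr)
    obtain ⟨zj, hzj⟩ := hsph Cj h1 h2 h3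
    refine ⟨zj, fun p hp => ?_⟩
    exact hzj _ ⟨p, hp, rfl⟩
  choose z hz using hcoord
  refine ⟨z, fun p hp => ?_⟩
  rw [vnrm_le_iff]
  intro j
  exact hz j p hp




/-- The fixed-point/surjectivity lemma for risometry-like self-maps of `B'`,
via spherical completeness. -/
theorem riso_like_surj [CharZero K] (hsph : SphericallyComplete A) (hn : 0 < n)
    (B' : Set (Fin n → K)) (P : (Fin n → K) → (Fin n → K))
    (hPfix : ∀ w ∈ B', P w = w)
    (hPcontr : ∀ z w : Fin n → K, vnrm A (P z - P w) ≤ vnrm A (z - w))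
    (hPaff : ∀ a b c : Fin n → K, P (a - b + c) = P a - P b + P c)
    (hPidem : ∀ z : Fin n → K, P (P z) = P z)
    (hclose : ∀ w ∈ B', ∀ a ∈ B', ∀ b ∈ B', ∀ z : Fin n → K,
      vnrm A (w - z) ≤ vnrm A (a - b) → P z = z → z ∈ B')
    (f : (Fin n → K) → (Fin n → K)) (hf1 : ∀ w ∈ B', f w ∈ B')
    (hf2 : ∀ w ∈ B', ∀ w' ∈ B', w ≠ w' →
      vnrm A (f w - f w' - (w - w')) < vnrm A (w - w'))
    (y : Fin n → K) (hy : y ∈ B') : ∃ w ∈ B', f w = y := by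
  classical
  by_contra hno
  push_neg at hno
  set r : (Fin n → K) → A.ValueGroup := fun w => vnrm A (f w - y) with hr
  have hr0 : ∀ w ∈ B', r w ≠ 0 := by
    intro w hw h
    exact hno w hw (by
      have := (vnrm_eq_zero_iff A).1 h
      exact sub_eq_zero.1 this)
  -- the approximating balls
  set Eb : (Fin n → K) → Set (Fin n → K) :=
    fun w => {z ∈ B' | vnrm A (z - w) ≤ r w} with hEb
  have hself : ∀ w ∈ B', w ∈ Eb w := by
    intro w hw
    exact ⟨hw, by simp [vnrm_zero, zero_le']⟩
  -- K1 : radius monotonicity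
  have K1 : ∀ w ∈ B', ∀ z ∈ B', vnrm A (z - w) ≤ r w → r z ≤ r w := by
    intro w hw z hz hd
    rcases eq_or_ne z w with rfl | hne
    · exact le_rfl
    · have e : f z - y = (f z - f w - (z - w)) + (z - w) + (f w - y) := by ring
      rw [hr]
      show vnrm A (f z - y) ≤ r w
      rw [e]
      refine le_trans (vnrm_add_le A _ _) (max_le ?_ le_rfl)
      refine le_trans (vnrm_add_le A _ _) (max_le ?_ hd)
      exact le_trans (le_of_lt (hf2 z hz w hw hne)) hd
  -- K2 : ball monotonicity
  have K2 : ∀ w ∈ B', ∀ z ∈ B', vnrm A (z - w) ≤ r w → Eb z ⊆ Eb w := by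
    intro w hw z hz hd t ht
    refine ⟨ht.1, ?_⟩
    have : vnrm A (t - w) ≤ max (vnrm A (t - z)) (vnrm A (z - w)) := by
      rw [show t - w = (t - z) + (z - w) by ring]
      exact vnrm_add_le A _ _
    exact le_trans this (max_le (le_trans ht.2 (K1 w hw z hz hd)) hd)
  -- K3 : strict decrease
  have K3 : ∀ w ∈ B', r (w - (f w - y)) < r w ∧ (w - (f w - y)) ∈ B' ∧
      vnrm A ((w - (f w - y)) - w) = r w := by
    intro w hw
    set w' := w - (f w - y) with hw'
    have hdist : vnrm A (w' - w) = r w := by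
      rw [show w' - w = -(f w - y) by rw [hw']; ring, vnrm_neg]
    have hw'P : P w' = w' := by
      have : w' = w - f w + y := by rw [hw']; ring
      rw [this, hPaff, hPfix w hw, hPfix _ (hf1 w hw), hPfix y hy]
    have hw'B : w' ∈ B' := by
      refine hclose w hw (f w) (hf1 w hw) y hy w' ?_ hw'P
      rw [show w - w' = f w - y by rw [hw']; ring]
    have hne : w' ≠ w := by
      intro h
      have : vnrm A (w' - w) = 0 := by rw [h, sub_self, vnrm_zero]
      exact hr0 w hw (by rw [← hdist]; exact this)
    refine ⟨?_, hw'B, hdist⟩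
    have e : f w' - y = f w' - f w - (w' - w) := by
      rw [hw']; ring
    rw [hr]
    show vnrm A (f w' - y) < r w
    rw [e, ← hdist]
    exact hf2 w' hw'B w hw hne
  -- Zorn's lemma
  set S : Set (Set (Fin n → K)) := {E | ∃ w ∈ B', E = Eb w} with hS
  have hzorn : ∀ c ⊆ S, IsChain (· ⊆ ·) c → ∃ lb ∈ S, ∀ s ∈ c, lb ⊆ s := by
    intro c hcS hchain
    rcases Set.eq_empty_or_nonempty c with rfl | hcne
    · exact ⟨Eb y, ⟨y, hy, rfl⟩, fun s hs => absurd hs (Set.notMem_empty s)⟩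
    · -- choose representatives
      have hrep : ∀ E ∈ c, ∃ w ∈ B', E = Eb w := fun E hE => hcS hE
      choose wit hwitB hwitE using hrep
      set J : Set ((Fin n → K) × A.ValueGroup) :=
        (fun E : {E // E ∈ c} => (wit E.1 E.2, r (wit E.1 E.2))) '' Set.univ with hJ
      have hJne : J.Nonempty := by
        obtain ⟨E, hE⟩ := hcne
        exact ⟨_, ⟨⟨E, hE⟩, Set.mem_univ _, rfl⟩⟩
      have hmono : ∀ E (hE : E ∈ c) F (hF : F ∈ c), E ⊆ F →
          vnrm A (wit E hE - wit F hF) ≤ r (wit F hF) ∧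
            r (wit E hE) ≤ r (wit F hF) := by
        intro E hE F hF hEF
        have h1 : wit E hE ∈ F := hEF (by
          have h2 := hself _ (hwitB E hE)
          rw [← hwitE E hE] at h2
          exact h2)
        rw [hwitE F hF] at h1
        exact ⟨h1.2, K1 _ (hwitB F hF) _ (hwitB E hE) h1.2⟩
      obtain ⟨z, hz⟩ := chain_balls_inter A hsph hn J hJne
        (by
          rintro p ⟨⟨E, hE⟩, -, rfl⟩
          obtain ⟨i, hi⟩ := vnrm_attain A hn (f (wit E hE) - y)
          refine ⟨(f (wit E hE) - y) i, ?_, hi.symm⟩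
          intro h0
          apply hr0 _ (hwitB E hE)
          rw [hr]
          show vnrm A (f (wit E hE) - y) = 0
          rw [hi, h0, map_zero])
        (by
          rintro p ⟨⟨E, hE⟩, -, rfl⟩ q ⟨⟨F, hF⟩, -, rfl⟩
          rcases hchain.total hE hF with hEF | hFE
          · exact Or.inl (hmono E hE F hF hEF)
          · exact Or.inr (hmono F hF E hE hFE))
      -- project the intersection point
      set z' := P z with hz'
      have hz'dist : ∀ E (hE : E ∈ c), vnrm A (z' - wit E hE) ≤ r (wit E hE) := by
        intro E hE
        have h1 : vnrm A (P z - P (wit E hE)) ≤ vnrm A (z - wit E hE) := hPcontr z _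
        rw [hPfix _ (hwitB E hE)] at h1
        exact le_trans h1 (hz _ ⟨⟨E, hE⟩, Set.mem_univ _, rfl⟩)
      obtain ⟨E₀, hE₀⟩ := hcne
      have hz'B : z' ∈ B' := by
        refine hclose (wit E₀ hE₀) (hwitB E₀ hE₀) (f (wit E₀ hE₀))
          (hf1 _ (hwitB E₀ hE₀)) y hy z' ?_ ?_
        · rw [show wit E₀ hE₀ - z' = -(z' - wit E₀ hE₀) by ring, vnrm_neg]
          exact hz'dist E₀ hE₀
        · exact hPidem z
      refine ⟨Eb z', ⟨z', hz'B, rfl⟩, ?_⟩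
      intro E hE
      rw [hwitE E hE]
      exact K2 _ (hwitB E hE) z' hz'B (hz'dist E hE)
  obtain ⟨m, hm⟩ := zorn_superset S hzorn
  obtain ⟨w, hwB, hmw⟩ := hm.1
  set w' := w - (f w - y) with hw'
  obtain ⟨hlt, hw'B, hdist⟩ := K3 w hwB
  have hsub : Eb w' ⊆ m := by
    rw [hmw]
    exact K2 w hwB w' hw'B (le_of_eq hdist)
  have heq : m ⊆ Eb w' := hm.2 ⟨w', hw'B, rfl⟩ hsub
  have hwmem : w ∈ Eb w' := heq (by rw [hmw]; exact hself w hwB)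
  have : vnrm A (w - w') ≤ r w' := hwmem.2
  rw [show w - w' = -(w' - w) by ring, vnrm_neg, hdist] at this
  exact absurd (lt_of_le_of_lt this hlt) (lt_irrefl _)


/-- The key lemma: riso-triviality is closed under sums of residue subspaces. -/
theorem key [CharZero K] {n : ℕ} {S : Type*}
    (hsph : SphericallyComplete A)
    (B : Set (Fin n → K)) (hB : IsBall A B) (χ : (Fin n → K) → S)
    (Vb1 Vb2 : Submodule RF (Fin n → RF))
    (h₁ : RisoTrivialOn A χ B Vb1) (h₂ : RisoTrivialOn A χ B Vb2) :
    RisoTrivialOn A χ B (Vb1 ⊔ Vb2) := by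
  classical
  obtain ⟨V₁, hL1, φ₁, hφ₁, hinv1⟩ := h₁
  obtain ⟨V₂, hL2, φ₂, hφ₂, hinv2⟩ := h₂
  have hn : 0 < n := by
    rcases Nat.eq_zero_or_pos n with h | h
    · exfalso
      subst h
      exact hB.1 (Set.toFinite B)
    · exact h
  -- good residue basis with compatible lifts
  obtain ⟨ℓ, T1, T2, hu, hind, hindsp, hdisjT, hT1V, hT2V, hspan12, hspan2⟩ :=
    exists_good_family A V₁ V₂ Vb1 Vb2 hL1 hL2
  have hKind : LinearIndependent K ℓ := ell_lin_indep A ℓ hu hind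
  have hKsp : Submodule.span K (Set.range ℓ) = ⊤ := ell_span A ℓ hu hind
  set b : Module.Basis (Fin n) K (Fin n → K) := Module.Basis.mk hKind (by rw [hKsp]) with hbdef
  have hb : ∀ i, b i = ℓ i := fun i => Module.Basis.mk_apply _ _ i
  set bR : Module.Basis (Fin n) RF (Fin n → RF) :=
    Module.Basis.mk hind (by rw [hindsp]) with hbRdef
  have hbR : ∀ i, bR i = resVec A (ℓ i) := fun i => Module.Basis.mk_apply _ _ i
  -- the lift of Vb1 ⊔ Vb2 and the two pieces
  set V : Submodule K (Fin n → K) := Submodule.span K (ℓ '' (T1 ∪ T2)) with hVdef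
  have hLift : IsLift A V (Vb1 ⊔ Vb2) := by
    have h := lift_span A ℓ hu hind b hb bR hbR (T1 ∪ T2)
    rwa [hspan12] at h
  set V1' : Submodule K (Fin n → K) := Submodule.span K (ℓ '' T1) with hV1'def
  set V2' : Submodule K (Fin n → K) := Submodule.span K (ℓ '' T2) with hV2'def
  have hV1V : V1' ≤ V₁ := by
    rw [hV1'def, Submodule.span_le]
    rintro x ⟨i, hi, rfl⟩
    exact hT1V i hi
  have hV2V : V2' ≤ V₂ := by
    rw [hV2'def, Submodule.span_le]
    rintro x ⟨i, hi, rfl⟩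
    exact hT2V i hi
  have hV1W : V1' ≤ Submodule.span K (ℓ '' T2ᶜ) := by
    rw [hV1'def]
    apply Submodule.span_mono
    apply Set.image_mono
    intro i hi
    exact (Set.disjoint_left.1 hdisjT) hi
  have hVsup : V = V1' ⊔ V2' := by
    rw [hVdef, hV1'def, hV2'def, Set.image_union, Submodule.span_union]
  -- the projection and the affine retraction
  set π : (Fin n → K) →ₗ[K] (Fin n → K) := projAway b T2 with hπdef
  have hx₀ : (ball_nonempty A hB).some ∈ B := (ball_nonempty A hB).some_mem
  set x₀ : Fin n → K := (ball_nonempty A hB).some with hx₀def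
  set Pt : (Fin n → K) → (Fin n → K) := fun z => x₀ + π (z - x₀) with hPt
  have hPtdiff : ∀ a c : Fin n → K, Pt a - Pt c = π (a - c) := by
    intro a c
    rw [hPt]
    simp only
    rw [show x₀ + π (a - x₀) - (x₀ + π (c - x₀)) = π (a - x₀) - π (c - x₀) by ring,
      ← map_sub]
    congr 1
    ring
  have hPtsub : ∀ z : Fin n → K, Pt z - z ∈ V2' := by
    intro z
    rw [hPt]
    simp only
    rw [show x₀ + π (z - x₀) - z = -((z - x₀) - π (z - x₀)) by ring]
    exact neg_mem (projAway_diff_mem ℓ b hb T2 (z - x₀))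
  have hPtcontr : ∀ z w : Fin n → K, vnrm A (Pt z - Pt w) ≤ vnrm A (z - w) := by
    intro z w
    rw [hPtdiff]
    exact projAway_norm_le A ℓ hu hind b hb T2 (z - w)
  have hPtaff : ∀ a c d : Fin n → K, Pt (a - c + d) = Pt a - Pt c + Pt d := by
    intro a c d
    rw [hPt]
    simp only
    rw [show a - c + d - x₀ = (a - x₀) - (c - x₀) + (d - x₀) by ring, map_add, map_sub]
    ring
  have hPtidem : ∀ z : Fin n → K, Pt (Pt z) = Pt z := by
    intro z
    rw [hPt]
    simp only
    congr 1
    rw [add_sub_cancel_left]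
    exact projAway_fix ℓ b hb T2 (projAway_mem_W ℓ b hb T2 (z - x₀))
  have hPtfixW : ∀ z : Fin n → K, z ∈ Submodule.span K (ℓ '' T2ᶜ) → π z = z :=
    fun z hz => projAway_fix ℓ b hb T2 hz
  have hPtB : ∀ z ∈ B, Pt z ∈ B := by
    intro z hz
    refine ball_mem A hB hx₀ hx₀ hz ?_
    have : x₀ - Pt z = -(π (z - x₀)) := by rw [hPt]; simp only; ring
    rw [this, vnrm_neg]
    refine le_trans (projAway_norm_le A ℓ hu hind b hb T2 (z - x₀)) ?_
    rw [vnrm_sub_rev]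
  -- B' and the induced risometry-like map
  set B' : Set (Fin n → K) := B ∩ {z | Pt z = z} with hB'def
  have hB'B : B' ⊆ B := Set.inter_subset_left
  have hPtmem : ∀ z ∈ B, Pt z ∈ B' := fun z hz => ⟨hPtB z hz, hPtidem z⟩
  have hclose' : ∀ w ∈ B', ∀ a ∈ B', ∀ c ∈ B', ∀ z : Fin n → K,
      vnrm A (w - z) ≤ vnrm A (a - c) → Pt z = z → z ∈ B' := by
    intro w hw a ha c hc z hd hfix
    exact ⟨ball_mem A hB (hB'B hw) (hB'B ha) (hB'B hc) hd, hfix⟩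
  -- the auxiliary risometry ρ
  obtain ⟨ψ₂, hψ₂, hψ₂r, hψ₂l⟩ := riso_inv A hφ₂
  set ρ : (Fin n → K) → (Fin n → K) := fun z => ψ₂ (φ₁ z) with hρdef
  have hρ : IsRisometryOn A ρ B B := IsRisometryOn.comp A hψ₂ hφ₁
  have hρB : ∀ z ∈ B, ρ z ∈ B := fun z hz => hρ.1.1 hz
  have hχρ : ∀ z ∈ B, χ (φ₂ (ρ z)) = χ (φ₁ z) := by
    intro z hz
    rw [hρdef]
    simp only
    rw [hψ₂r _ (hφ₁.1.1 hz)]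
  set ρbar : (Fin n → K) → (Fin n → K) := fun z => Pt (ρ z) with hρbardef
  have hρbarB' : ∀ w ∈ B', ρbar w ∈ B' := fun w hw => hPtmem _ (hρB _ (hB'B hw))
  have hρbarineq : ∀ w ∈ B', ∀ w' ∈ B', w ≠ w' →
      vnrm A (ρbar w - ρbar w' - (w - w')) < vnrm A (w - w') := by
    intro w hw w' hw' hne
    have e : ρbar w - ρbar w' - (w - w') = π (ρ w - ρ w' - (w - w')) := by
      rw [hρbardef]
      simp only
      rw [hPtdiff]
      have : w - w' = π (w - w') := by
        rw [← hPtdiff]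
        rw [hw.2, hw'.2]
      conv_lhs => rw [this]
      rw [← map_sub]
    rw [e]
    exact lt_of_le_of_lt (projAway_norm_le A ℓ hu hind b hb T2 _)
      (hρ.2 w (hB'B hw) w' (hB'B hw') hne)
  -- surjectivity of ρbar on B'
  have hsurj : ∀ y ∈ B', ∃ w ∈ B', ρbar w = y := by
    intro y hy
    refine riso_like_surj A hsph hn B' Pt (fun w hw => hw.2) hPtcontr hPtaff hPtidem
      hclose' ρbar hρbarB' hρbarineq y hy
  -- the corrected risometry g
  set g : (Fin n → K) → (Fin n → K) := fun x => ρbar (Pt x) + (x - Pt x) with hgdef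
  have hxPtnorm : ∀ x : Fin n → K, vnrm A (x - Pt x) ≤ vnrm A (x - x₀) := by
    intro x
    have e : x - Pt x = (x - x₀) + (-(π (x - x₀))) := by
      rw [hPt]; simp only; ring
    rw [e]
    refine le_trans (vnrm_add_le A _ _) (max_le le_rfl ?_)
    rw [vnrm_neg]
    exact projAway_norm_le A ℓ hu hind b hb T2 _
  have hgB : ∀ x ∈ B, g x ∈ B := by
    intro x hx
    refine ball_mem A hB (hB'B (hρbarB' _ (hPtmem x hx))) hx hx₀ ?_
    rw [show ρbar (Pt x) - g x = -(x - Pt x) by rw [hgdef]; simp only; ring, vnrm_neg]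
    exact hxPtnorm x
  have hPtg : ∀ x ∈ B, Pt (g x) = ρbar (Pt x) := by
    intro x hx
    have e : g x = ρbar (Pt x) - Pt x + x := by rw [hgdef]; simp only; ring
    rw [e, hPtaff, (hρbarB' _ (hPtmem x hx)).2, hPtidem]
    ring
  have hgineq : ∀ x ∈ B, ∀ x' ∈ B, x ≠ x' →
      vnrm A (g x - g x' - (x - x')) < vnrm A (x - x') := by
    intro x hx x' hx' hne
    have e : g x - g x' - (x - x') = ρbar (Pt x) - ρbar (Pt x') - (Pt x - Pt x') := by
      rw [hgdef]; simp only; ring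
    rw [e]
    rcases eq_or_ne (Pt x) (Pt x') with hPP | hPP
    · rw [hPP]
      simp only [sub_self, vnrm_zero]
      exact vnrm_pos A (sub_ne_zero.2 hne)
    · refine lt_of_lt_of_le
        (hρbarineq _ (hPtmem x hx) _ (hPtmem x' hx') hPP) ?_
      rw [hPtdiff]
      exact projAway_norm_le A ℓ hu hind b hb T2 _
  have hgInj : Set.InjOn g B := by
    intro x hx x' hx' hgg
    by_contra hne
    have := hgineq x hx x' hx' hne
    rw [hgg] at this
    rw [show g x' - g x' - (x - x') = -(x - x') by ring, vnrm_neg] at this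
    exact absurd this (lt_irrefl _)
  have hgSurj : ∀ y ∈ B, ∃ x ∈ B, g x = y := by
    intro y hy
    obtain ⟨w, hwB', hww⟩ := hsurj (Pt y) (hPtmem y hy)
    set x : Fin n → K := w + (y - Pt y) with hxdef
    have hxw : vnrm A (w - x) ≤ vnrm A (y - x₀) := by
      rw [show w - x = -(y - Pt y) by rw [hxdef]; ring, vnrm_neg]
      exact hxPtnorm y
    have hxB : x ∈ B := ball_mem A hB (hB'B hwB') hy hx₀ hxw
    have hPtx : Pt x = w := by
      have e : x = w - Pt y + y := by rw [hxdef]; ring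
      rw [e, hPtaff, hwB'.2, hPtidem]
      ring
    refine ⟨x, hxB, ?_⟩
    rw [hgdef]
    simp only
    rw [hPtx, hww, hxdef]
    ring
  have hg : IsRisometryOn A g B B := by
    refine ⟨⟨fun x hx => hgB x hx, hgInj, ?_⟩, hgineq⟩
    intro y hy
    obtain ⟨x, hxB, hxg⟩ := hgSurj y hy
    exact ⟨x, hxB, hxg⟩
  -- invariance claims
  have claimA : ∀ p ∈ B, ∀ q ∈ B, p - q ∈ V1' → χ (φ₂ (g p)) = χ (φ₂ (g q)) := by
    intro p hp q hq hpq
    have step1 : ∀ t ∈ B, χ (φ₂ (g t)) = χ (φ₂ (ρ (Pt t))) := by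
      intro t ht
      have h1 : χ (φ₂ (g t)) = χ (φ₂ (ρbar (Pt t))) := by
        refine hinv2 _ (hgB t ht) _ (hB'B (hρbarB' _ (hPtmem t ht))) ?_
        refine hV2V ?_
        rw [show g t - ρbar (Pt t) = -(Pt t - t) by rw [hgdef]; simp only; ring]
        exact neg_mem (hPtsub t)
      have h2 : χ (φ₂ (ρbar (Pt t))) = χ (φ₂ (ρ (Pt t))) := by
        refine hinv2 _ (hB'B (hρbarB' _ (hPtmem t ht))) _
          (hρB _ (hB'B (hPtmem t ht))) ?_
        refine hV2V ?_
        rw [hρbardef]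
        simp only
        exact hPtsub (ρ (Pt t))
      rw [h1, h2]
    rw [step1 p hp, step1 q hq]
    have hPt1 : Pt p - Pt q ∈ V₁ := by
      rw [hPtdiff]
      rw [hPtfixW _ (hV1W hpq)]
      exact hV1V hpq
    have hPp : Pt p ∈ B := hB'B (hPtmem p hp)
    have hPq : Pt q ∈ B := hB'B (hPtmem q hq)
    rw [hχρ _ hPp, hχρ _ hPq]
    exact hinv1 _ hPp _ hPq hPt1
  have claimB : ∀ p ∈ B, ∀ q ∈ B, p - q ∈ V2' → χ (φ₂ (g p)) = χ (φ₂ (g q)) := by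
    intro p hp q hq hpq
    refine hinv2 _ (hgB p hp) _ (hgB q hq) (hV2V ?_)
    have hPP : Pt p = Pt q := by
      have : Pt p - Pt q = 0 := by
        rw [hPtdiff]
        exact projAway_kill ℓ b hb T2 hpq
      exact sub_eq_zero.1 this
    rw [show g p - g q = (p - q) + (ρbar (Pt p) - ρbar (Pt q)) - (Pt p - Pt q) by
      rw [hgdef]; simp only; ring, hPP]
    simp only [sub_self, add_zero, sub_zero, add_sub_cancel_right]
    exact hpq
  -- conclusion
  refine ⟨V, hLift, fun x => φ₂ (g x), IsRisometryOn.comp A hφ₂ hg, ?_⟩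
  intro x hx x' hx' hxx
  rw [hVsup] at hxx
  obtain ⟨a, ha, c, hc, hac⟩ := Submodule.mem_sup.1 hxx
  set z : Fin n → K := x - a with hzdef
  have hanorm : vnrm A a ≤ vnrm A (x - x') := by
    have h1 : π (a + c) = a := by
      rw [map_add, hPtfixW _ (hV1W ha), projAway_kill ℓ b hb T2 hc, add_zero]
    calc vnrm A a = vnrm A (π (a + c)) := by rw [h1]
      _ ≤ vnrm A (a + c) := projAway_norm_le A ℓ hu hind b hb T2 _
      _ = vnrm A (x - x') := by rw [hac]
  have hzB : z ∈ B := by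
    refine ball_mem A hB hx hx hx' ?_
    rw [show x - z = a by rw [hzdef]; ring]
    exact hanorm
  have h1 : χ (φ₂ (g x)) = χ (φ₂ (g z)) :=
    claimA x hx z hzB (by rw [show x - z = a by rw [hzdef]; ring]; exact ha)
  have h2 : χ (φ₂ (g z)) = χ (φ₂ (g x')) :=
    claimB z hzB x' hx' (by
      rw [show z - x' = c by
        rw [hzdef]
        have e : x - a - x' = c := by
          rw [show x - a - x' = x - x' - a by ring, ← hac]
          ring
        exact e]
      exact hc)
  rw [h1, h2]

end RisoAux

/-- over a spherically complete valued field of equi-characteristic 0,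
if a map `χ : B → S` on a ball is `Vbar₁`- and `Vbar₂`-riso-trivial, then it is
`(Vbar₁ + Vbar₂)`-riso-trivial; consequently there is a (unique) maximal subspace of
`RF(K)ⁿ` for which `χ` is riso-trivial on `B`, the riso-triviality space. -/
theorem risoTrivial_sup (A : ValuationSubring K) [CharZero K]
    [CharZero (IsLocalRing.ResidueField A)]
    (hsph : SphericallyComplete A) {n : ℕ} {S : Type*}
    (B : Set (Fin n → K)) (hB : IsBall A B) (χ : (Fin n → K) → S)
    (Vbar₁ Vbar₂ : Submodule (IsLocalRing.ResidueField A)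
      (Fin n → IsLocalRing.ResidueField A))
    (h₁ : RisoTrivialOn A χ B Vbar₁) (h₂ : RisoTrivialOn A χ B Vbar₂) :
    RisoTrivialOn A χ B (Vbar₁ ⊔ Vbar₂) ∧
      ∃ Vbarmax, RisoTrivialOn A χ B Vbarmax ∧
        ∀ Vbar, RisoTrivialOn A χ B Vbar → Vbar ≤ Vbarmax := by
  have hkey := RisoAux.key A hsph B hB χ Vbar₁ Vbar₂ h₁ h₂
  refine ⟨hkey, ?_⟩
  have hwf : WellFounded ((· > ·) : Submodule (IsLocalRing.ResidueField A)
      (Fin n → IsLocalRing.ResidueField A) →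
      Submodule (IsLocalRing.ResidueField A)
      (Fin n → IsLocalRing.ResidueField A) → Prop) :=
    (wellFoundedGT (R := IsLocalRing.ResidueField A)
      (M := Fin n → IsLocalRing.ResidueField A)).wf
  obtain ⟨m, hmT, hmin⟩ := hwf.has_min {Vb | RisoTrivialOn A χ B Vb} ⟨Vbar₁, h₁⟩
  refine ⟨m, hmT, fun Vb hVb => ?_⟩
  have hsupT : RisoTrivialOn A χ B (m ⊔ Vb) := RisoAux.key A hsph B hB χ m Vb hmT hVb
  by_contra hnot
  have hlt : m < m ⊔ Vb :=
    lt_of_le_of_ne le_sup_left fun he =>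
      hnot (le_trans le_sup_right (le_of_eq he.symm))
  exact hmin _ hsupT hlt
end

section
/- Let K be a spherically complete valued field of equi-characteristic 0, B ⊆ Kⁿ a ball, W̄ ⊆ RF(K)ⁿ a subspace, χ : B → S a W̄-riso-trivial map, W ⊆ Kⁿ a lift of W̄, and π_W : B → W the restriction of a linear lift of a projection π̄_{W̄} : RF(K)ⁿ → W̄. If ψ : B → B is a W-straightener of χ (a risometry with χ∘ψ W-translation invariant), then there exists a risometry φ : B → B with χ∘φ = χ∘ψ and π_W ∘ φ = π_W. In particular, φ is a straightener of χ respecting π_W-fibers, and for every fiber F of π_W in B, φ|_F is a risometry from (χ∘ψ)|_F to χ|_F. -/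
open scoped Classical

variable {K : Type*} [Field K]

namespace VnAux


variable (A : ValuationSubring K) {n : ℕ}

lemma vnrm_le_iff {x : Fin n → K} {r : A.ValueGroup} :
    vnrm A x ≤ r ↔ ∀ i, A.valuation (x i) ≤ r := by
  simp [vnrm, Finset.sup_le_iff]

lemma le_vnrm (x : Fin n → K) (i : Fin n) : A.valuation (x i) ≤ vnrm A x := by
  letI : OrderBot A.ValueGroup := { bot := 0, bot_le := fun _ => zero_le' }
  exact Finset.le_sup (f := fun i => A.valuation (x i)) (Finset.mem_univ i)

lemma vnrm_eq_zero {x : Fin n → K} : vnrm A x = 0 ↔ x = 0 := by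
  constructor
  · intro h
    funext i
    have := (le_vnrm A x i).trans h.le
    simpa [le_zero_iff, Valuation.zero_iff] using this
  · rintro rfl
    have h1 : vnrm A (0 : Fin n → K) ≤ 0 := (vnrm_le_iff A).2 (by simp)
    exact le_antisymm h1 zero_le'

lemma vnrm_add_le (x y : Fin n → K) :
    vnrm A (x + y) ≤ max (vnrm A x) (vnrm A y) := by
  refine (vnrm_le_iff A).2 fun i => ?_
  refine (A.valuation.map_add (x i) (y i)).trans ?_
  exact max_le_max (le_vnrm A x i) (le_vnrm A y i)

lemma vnrm_neg (x : Fin n → K) : vnrm A (-x) = vnrm A x := by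
  unfold vnrm
  simp [Valuation.map_neg]

lemma vnrm_sub_rev (x y : Fin n → K) : vnrm A (x - y) = vnrm A (y - x) := by
  rw [← vnrm_neg A (x - y)]; ring_nf

lemma vnrm_smul (c : K) (x : Fin n → K) :
    vnrm A (c • x) = A.valuation c * vnrm A x := by
  rcases eq_or_ne c 0 with rfl | hc
  · simp [(vnrm_eq_zero A).2 rfl, (vnrm_eq_zero A (x := (0 : Fin n → K) • x)).2 (by simp)]
  · apply le_antisymm
    · refine (vnrm_le_iff A).2 fun i => ?_
      have : A.valuation (c * x i) = A.valuation c * A.valuation (x i) := A.valuation.map_mul _ _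
      simpa [this] using mul_le_mul_right (le_vnrm A x i) (A.valuation c)
    · have h2 : vnrm A x ≤ A.valuation c⁻¹ * vnrm A (c • x) := by
        refine (vnrm_le_iff A).2 fun i => ?_
        have : x i = c⁻¹ * (c * x i) := by field_simp
        rw [this, A.valuation.map_mul]
        exact mul_le_mul_right (by simpa using le_vnrm A (c • x) i) _
      calc A.valuation c * vnrm A x ≤ A.valuation c * (A.valuation c⁻¹ * vnrm A (c • x)) :=
            mul_le_mul_right h2 _
        _ = vnrm A (c • x) := by
            rw [← mul_assoc, ← A.valuation.map_mul]
            rw [mul_inv_cancel₀ hc, map_one, one_mul]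
        
lemma vnrm_add_eq_right {x y : Fin n → K} (h : vnrm A x < vnrm A y) :
    vnrm A (x + y) = vnrm A y := by
  apply le_antisymm ((vnrm_add_le A x y).trans (max_le h.le le_rfl))
  have : vnrm A y = vnrm A ((x + y) + (-x)) := by ring_nf
  rw [this]
  refine (vnrm_add_le A _ _).trans (max_le le_rfl ?_)
  rw [vnrm_neg]
  by_contra hle
  push_neg at hle
  have h3 : vnrm A y ≤ max (vnrm A (x + y)) (vnrm A (-x)) := by
    have hyy : y = (x + y) + (-x) := by ring
    calc vnrm A y = vnrm A ((x + y) + (-x)) := by rw [← hyy]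
      _ ≤ _ := vnrm_add_le A _ _
  rw [vnrm_neg] at h3
  have h4 : vnrm A y ≤ vnrm A x := h3.trans (max_le hle.le le_rfl)
  exact absurd (h.trans_le h4) (lt_irrefl _)

lemma vnrm_pos {x : Fin n → K} (hx : x ≠ 0) : 0 < vnrm A x :=
  zero_lt_iff.2 fun h => hx ((vnrm_eq_zero A).1 h)




variable (A : ValuationSubring K) {n : ℕ}

def VB (w : Fin n → K) (r : A.ValueGroup) : Set (Fin n → K) := {z | vnrm A (z - w) ≤ r}

lemma ball1_isBall [CharZero K] (c : K) (r : A.ValueGroup) (hr : r ≠ 0) :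
    IsBall1 A {t : K | A.valuation (t - c) ≤ r} := by
  constructor
  · obtain ⟨c₀, hc₀⟩ := A.valuation_surjective r
    have hc0 : c₀ ≠ 0 := fun h => hr (by rw [← hc₀, h, map_zero])
    apply Set.infinite_of_injective_forall_mem (f := fun m : ℕ => c + c₀ * (m : K))
    · intro a b hab
      simp only [add_right_inj] at hab
      exact Nat.cast_injective (mul_left_cancel₀ hc0 hab)
    · intro m
      have h1 : (c + c₀ * (m : K)) - c = c₀ * (m : K) := by ring
      simp only [Set.mem_setOf_eq, h1, A.valuation.map_mul]
      calc A.valuation c₀ * A.valuation (m : K) ≤ A.valuation c₀ * 1 :=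
            mul_le_mul_right (by exact_mod_cast A.valuation_le_one (m : A)) _
        _ = r := by rw [mul_one, hc₀]
  · intro x hx x' hx' y hy
    simp only [Set.mem_setOf_eq] at *
    have h1 : A.valuation (x - x') ≤ r := by
      have : x - x' = (x - c) - (x' - c) := by ring
      rw [this]
      exact (A.valuation.map_sub _ _).trans (max_le hx hx')
    have h2 : y - c = (x - c) - (x - y) := by ring
    rw [h2]
    exact (A.valuation.map_sub _ _).trans (max_le hx (hy.trans h1))

lemma sphere_n [CharZero K] (hsph : SphericallyComplete A)
    (c : Set (Set (Fin n → K))) (hch : IsChain (· ⊆ ·) c) (hne : c.Nonempty)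
    (hform : ∀ P ∈ c, ∃ w r, r ≠ (0 : A.ValueGroup) ∧ P = VB A w r) :
    (⋂₀ c).Nonempty := by
  classical
  choose! w r hr hP using hform
  have key : ∀ i : Fin n, ∃ t : K, ∀ P ∈ c, A.valuation (t - w P i) ≤ r P := by
    intro i
    set ci : Set (Set K) := (fun P => {t : K | A.valuation (t - w P i) ≤ r P}) '' c with hci
    have hcine : ci.Nonempty := hne.image _
    have hciball : ∀ Bl ∈ ci, IsBall1 A Bl := by
      rintro _ ⟨P, hPc, rfl⟩; exact ball1_isBall A _ _ (hr P hPc)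
    have hsub : ∀ P ∈ c, ∀ Q ∈ c, P ⊆ Q →
        {t : K | A.valuation (t - w P i) ≤ r P} ⊆ {t : K | A.valuation (t - w Q i) ≤ r Q} := by
      intro P hPc Q hQc hPQ t ht
      have hz : Function.update (w P) i t ∈ P := by
        have hz' : Function.update (w P) i t ∈ VB A (w P) (r P) := by
          refine (vnrm_le_iff A).2 fun j => ?_
          rcases eq_or_ne j i with rfl | hj
          · simpa [Function.update] using ht
          · simp [Function.update, hj]
        rw [← hP P hPc] at hz'
        exact hz'
      have hzQ := hPQ hz
      rw [hP Q hQc] at hzQ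
      have := (vnrm_le_iff A).1 hzQ i
      simpa [Function.update] using this
    have hcichain : IsChain (· ⊆ ·) ci := by
      rintro _ ⟨P, hPc, rfl⟩ _ ⟨Q, hQc, rfl⟩ hne'
      rcases eq_or_ne P Q with rfl | hPQ
      · exact absurd rfl hne'
      · rcases hch hPc hQc hPQ with h | h
        · exact Or.inl (hsub P hPc Q hQc h)
        · exact Or.inr (hsub Q hQc P hPc h)
    obtain ⟨t, ht⟩ := hsph ci hcine hciball hcichain
    exact ⟨t, fun P hPc => ht _ ⟨P, hPc, rfl⟩⟩
  choose t ht using key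
  refine ⟨t, fun P hPc => ?_⟩
  rw [hP P hPc]
  exact (vnrm_le_iff A).2 fun i => ht i P hPc

lemma exists_fixed [CharZero K] (hsph : SphericallyComplete A)
    (T : (Fin n → K) → (Fin n → K)) (D : Set (Fin n → K)) (hne : D.Nonempty)
    (hmap : ∀ w ∈ D, T w ∈ D)
    (habs : ∀ w ∈ D, ∀ z, vnrm A (z - w) ≤ vnrm A (w - T w) → z ∈ D)
    (hcontr : ∀ w₁ ∈ D, ∀ w₂ ∈ D, w₁ ≠ w₂ → vnrm A (T w₁ - T w₂) < vnrm A (w₁ - w₂)) :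
    ∃ w ∈ D, T w = w := by
  by_contra hfix
  push_neg at hfix
  set rad : (Fin n → K) → A.ValueGroup := fun w => vnrm A (w - T w) with hrad
  have hrad0 : ∀ w ∈ D, rad w ≠ 0 := by
    intro w hw h0
    exact hfix w hw (sub_eq_zero.1 ((vnrm_eq_zero A).1 h0)).symm
  set S : Set (Set (Fin n → K)) := {P | ∃ w ∈ D, P = VB A w (rad w)} with hS
  have hself : ∀ w : Fin n → K, w ∈ VB A w (rad w) := by
    intro w
    show vnrm A (w - w) ≤ rad w
    rw [sub_self, (vnrm_eq_zero A).2 rfl]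
    exact zero_le'
  have hstep : ∀ w ∈ D, ∀ z ∈ VB A w (rad w), z ∈ D ∧ VB A z (rad z) ⊆ VB A w (rad w) := by
    intro w hw z hz
    have hz' : vnrm A (z - w) ≤ rad w := hz
    have hzD : z ∈ D := habs w hw z hz'
    have hradz : rad z ≤ rad w := by
      rcases eq_or_ne z w with rfl | hzw
      · exact le_rfl
      · have hTT : vnrm A (T w - T z) < vnrm A (w - z) :=
          hcontr w hw z hzD (fun h => hzw h.symm)
        have h1 : vnrm A (w - z) = vnrm A (z - w) := vnrm_sub_rev A w z
        calc rad z = vnrm A ((z - w) + ((w - T w) + (T w - T z))) := by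
              rw [hrad]; congr 1; ring
          _ ≤ max (vnrm A (z - w)) (max (vnrm A (w - T w)) (vnrm A (T w - T z))) :=
              (vnrm_add_le A _ _).trans (max_le_max le_rfl (vnrm_add_le A _ _))
          _ ≤ rad w := max_le hz' (max_le le_rfl (le_of_lt (hTT.trans_le (h1 ▸ hz'))))
    refine ⟨hzD, fun y hy => ?_⟩
    have hy' : vnrm A (y - z) ≤ rad z := hy
    show vnrm A (y - w) ≤ rad w
    calc vnrm A (y - w) = vnrm A ((y - z) + (z - w)) := by congr 1; ring
      _ ≤ max (vnrm A (y - z)) (vnrm A (z - w)) := vnrm_add_le A _ _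
      _ ≤ rad w := max_le (hy'.trans hradz) hz'
  obtain ⟨m, hm⟩ := zorn_superset S (by
    intro c hcsub hchain
    rcases c.eq_empty_or_nonempty with rfl | hcne
    · obtain ⟨w0, hw0⟩ := hne
      exact ⟨VB A w0 (rad w0), ⟨w0, hw0, rfl⟩, by simp⟩
    · have hform : ∀ P ∈ c, ∃ w' r', r' ≠ (0 : A.ValueGroup) ∧ P = VB A w' r' := by
        intro P hP
        obtain ⟨w', hw'D, rfl⟩ := hcsub hP
        exact ⟨w', rad w', hrad0 w' hw'D, rfl⟩
      obtain ⟨z, hz⟩ := sphere_n A hsph c hchain hcne hform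
      obtain ⟨P₀, hP₀⟩ := hcne
      have hzD : z ∈ D := by
        obtain ⟨w₀, hw₀D, rfl⟩ := hcsub hP₀
        exact (hstep w₀ hw₀D z (hz _ hP₀)).1
      refine ⟨VB A z (rad z), ⟨z, hzD, rfl⟩, fun P hP => ?_⟩
      obtain ⟨w', hw'D, rfl⟩ := hcsub hP
      exact (hstep w' hw'D z (hz _ hP)).2)
  obtain ⟨w, hwD, rfl⟩ := hm.1
  have hTw : T w ∈ D := hmap w hwD
  have hne' : w ≠ T w := fun h => hfix w hwD h.symm
  have hTwm : T w ∈ VB A w (rad w) := by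
    show vnrm A (T w - w) ≤ rad w
    rw [vnrm_sub_rev]
  have h2 : VB A (T w) (rad (T w)) ⊆ VB A w (rad w) := (hstep w hwD (T w) hTwm).2
  have h4 : VB A w (rad w) ⊆ VB A (T w) (rad (T w)) := hm.2 ⟨T w, hTw, rfl⟩ h2
  have h5 : vnrm A (w - T w) ≤ rad (T w) := h4 (hself w)
  have h6 : vnrm A (T w - T (T w)) < vnrm A (w - T w) := hcontr w hwD (T w) hTw hne'
  exact absurd (lt_of_le_of_lt h5 h6) (lt_irrefl _)


lemma exists_eq_vnrm [NeZero n] (x : Fin n → K) :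
    ∃ j, vnrm A x = A.valuation (x j) := by
  letI : OrderBot A.ValueGroup := { bot := 0, bot_le := fun _ => zero_le' }
  obtain ⟨j, _, hj⟩ := Finset.exists_mem_eq_sup (Finset.univ : Finset (Fin n))
    Finset.univ_nonempty (fun i => A.valuation (x i))
  exact ⟨j, hj⟩

lemma vnrm_lt_one (x : Fin n → K) (h : ∀ i, A.valuation (x i) < 1) :
    vnrm A x < 1 := by
  letI : OrderBot A.ValueGroup := { bot := 0, bot_le := fun _ => zero_le' }
  refine Finset.sup_lt_iff (show (⊥ : A.ValueGroup) < 1 from zero_lt_one) |>.2 ?_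
  exact fun i _ => h i

lemma pi_bounded (π : (Fin n → K) →ₗ[K] (Fin n → K))
    (h : ∀ x : Fin n → K, (∀ i, x i ∈ A) → ∀ i, π x i ∈ A) :
    ∀ x : Fin n → K, vnrm A (π x) ≤ vnrm A x := by
  classical
  intro x
  have hbasis : ∀ i : Fin n, ∀ j, π (fun k => if i = k then 1 else 0) j ∈ A := by
    intro i
    refine h _ fun k => ?_
    by_cases hik : i = k <;> simp [hik, A.one_mem, A.zero_mem]
  have hx : π x = ∑ i : Fin n, x i • π (fun k => if i = k then 1 else 0) := by
    conv_lhs => rw [pi_eq_sum_univ x]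
    rw [map_sum]
    simp [map_smul]
  refine (vnrm_le_iff A).2 fun j => ?_
  rw [hx]
  have hxj : (∑ i : Fin n, x i • π (fun k => if i = k then 1 else 0)) j
      = ∑ i : Fin n, x i * π (fun k => if i = k then 1 else 0) j := by
    simp [Finset.sum_apply]
  rw [hxj]
  refine Valuation.map_sum_le _ fun i _ => ?_
  rw [A.valuation.map_mul]
  calc A.valuation (x i) * A.valuation (π (fun k => if i = k then 1 else 0) j)
      ≤ A.valuation (x i) * 1 :=
        mul_le_mul_right (A.valuation_le_one ⟨_, hbasis i j⟩) _
    _ ≤ vnrm A x := by rw [mul_one]; exact le_vnrm A x i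

lemma pi_near_id
    (W : Submodule K (Fin n → K))
    (Wbar : Submodule (IsLocalRing.ResidueField A) (Fin n → IsLocalRing.ResidueField A))
    (hW : IsLift A W Wbar)
    (pibar : (Fin n → IsLocalRing.ResidueField A) →ₗ[IsLocalRing.ResidueField A]
      (Fin n → IsLocalRing.ResidueField A))
    (hpibar_id : ∀ yb ∈ Wbar, pibar yb = yb)
    (π : (Fin n → K) →ₗ[K] (Fin n → K))
    (hπ_lift : ∀ x : Fin n → K, (∀ i, x i ∈ A) →
      (∀ i, π x i ∈ A) ∧ resVec A (π x) = pibar (resVec A x)) :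
    ∀ u, u ∈ W → u ≠ 0 → vnrm A (π u - u) < vnrm A u := by
  intro u huW hu
  have hnz : ∃ j₀, u j₀ ≠ 0 := by
    by_contra h
    push_neg at h
    exact hu (funext h)
  obtain ⟨j₀, hj₀⟩ := hnz
  haveI : NeZero n := ⟨fun h => by subst h; exact Fin.elim0 j₀⟩
  obtain ⟨j, hj⟩ := exists_eq_vnrm A u
  have huj : u j ≠ 0 := by
    intro h0
    exact hu ((vnrm_eq_zero A).1 (by rw [hj, h0, map_zero]))
  set c := (u j)⁻¹ with hc
  have hcne : c ≠ 0 := inv_ne_zero huj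
  set u' := c • u with hu'
  have hentries : ∀ i, u' i ∈ A := by
    intro i
    apply A.mem_of_valuation_le_one
    have hui : u' i = c * u i := rfl
    rw [hui, A.valuation.map_mul]
    have h1 : A.valuation (u i) ≤ A.valuation (u j) := hj ▸ le_vnrm A u i
    calc A.valuation c * A.valuation (u i)
        ≤ A.valuation c * A.valuation (u j) := mul_le_mul_right h1 _
      _ = A.valuation (c * u j) := (A.valuation.map_mul _ _).symm
      _ = 1 := by rw [hc, inv_mul_cancel₀ huj, map_one]
  have hu'W : u' ∈ W := W.smul_mem c huW
  have hres : resVec A u' ∈ Wbar := by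
    have h2 : resVec A u' ∈ {yb | ∃ x ∈ W, (∀ i, x i ∈ A) ∧ resVec A x = yb} :=
      ⟨u', hu'W, hentries, rfl⟩
    rw [hW] at h2
    exact h2
  obtain ⟨hπe, hπr⟩ := hπ_lift u' hentries
  have hres2 : resVec A (π u') = resVec A u' := by rw [hπr, hpibar_id _ hres]
  have hcoord : ∀ i, A.valuation (π u' i - u' i) < 1 := by
    intro i
    have e1 := congrFun hres2 i
    simp only [resVec, dif_pos (hπe i), dif_pos (hentries i)] at e1
    have e2 : (⟨π u' i, hπe i⟩ - ⟨u' i, hentries i⟩ : A) ∈ IsLocalRing.maximalIdeal A :=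
      Ideal.Quotient.eq.mp e1
    have e3 := (A.valuation_lt_one_iff _).1 e2
    simpa using e3
  have hlt1 : vnrm A (π u' - u') < 1 :=
    vnrm_lt_one A _ (fun i => by simpa using hcoord i)
  have hscale : π u - u = (u j) • (π u' - u') := by
    rw [hu', map_smul, smul_sub, smul_smul, smul_smul, hc, mul_inv_cancel₀ huj,
      one_smul, one_smul]
  rw [hscale, vnrm_smul, hj]
  have hmul : A.valuation (u j) * vnrm A (π u' - u') < A.valuation (u j) * 1 :=
    mul_lt_mul_of_pos_left hlt1 (zero_lt_iff.2 (by simp [Valuation.zero_iff, huj]))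
  rwa [mul_one] at hmul

end VnAux

/-- fiber compatibility: if `ψ` is a `W`-straightener of `χ` on the
ball `B`, where `W` lifts `Wbar` and `π` lifts a projection `π̄` onto `Wbar`, then
there is a risometry `φ : B → B` with `χ∘φ = χ∘ψ` and `π∘φ = π`; in particular `φ`
is a straightener of `χ` respecting `π`-fibers, and on every fiber `F` of `π` in
`B`, `φ|_F` is a risometry from `(χ∘ψ)|_F` to `χ|_F`. -/
theorem fiber_compatible_straightener (A : ValuationSubring K) [CharZero K]
    [CharZero (IsLocalRing.ResidueField A)] (hsph : SphericallyComplete A)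
    {n : ℕ} {S : Type*} (B : Set (Fin n → K)) (hB : IsBall A B)
    (χ : (Fin n → K) → S)
    (Wbar : Submodule (IsLocalRing.ResidueField A)
      (Fin n → IsLocalRing.ResidueField A))
    (W : Submodule K (Fin n → K)) (hW : IsLift A W Wbar)
    (pibar : (Fin n → IsLocalRing.ResidueField A) →ₗ[IsLocalRing.ResidueField A]
      (Fin n → IsLocalRing.ResidueField A))
    (hpibar_mem : ∀ yb, pibar yb ∈ Wbar) (hpibar_id : ∀ yb ∈ Wbar, pibar yb = yb)
    (π : (Fin n → K) →ₗ[K] (Fin n → K)) (hπ_mem : ∀ x, π x ∈ W)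
    (hπ_lift : ∀ x : Fin n → K, (∀ i, x i ∈ A) →
      (∀ i, π x i ∈ A) ∧ resVec A (π x) = pibar (resVec A x))
    (ψ : (Fin n → K) → (Fin n → K)) (hψ : IsRisometryOn A ψ B B)
    (hstraight : ∀ x ∈ B, ∀ x' ∈ B, x - x' ∈ W → χ (ψ x) = χ (ψ x')) :
    ∃ φ : (Fin n → K) → (Fin n → K), IsRisometryOn A φ B B ∧
      (∀ x ∈ B, χ (φ x) = χ (ψ x)) ∧ (∀ x ∈ B, π (φ x) = π x) ∧
      (∀ x ∈ B, ∀ x' ∈ B, x - x' ∈ W → χ (φ x) = χ (φ x')) ∧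
      ∀ w : Fin n → K,
        IsRisometryOn A φ (B ∩ π ⁻¹' {w}) (B ∩ π ⁻¹' {w}) ∧
          ∀ x ∈ B ∩ π ⁻¹' {w}, χ (ψ x) = χ (φ x) := by
  classical
  open VnAux in
  have hψB : Set.MapsTo ψ B B := hψ.1.1
  have hbd : ∀ x : Fin n → K, vnrm A (π x) ≤ vnrm A x :=
    pi_bounded A π (fun x hx => (hπ_lift x hx).1)
  have hnear : ∀ u, u ∈ W → u ≠ 0 → vnrm A (π u - u) < vnrm A u :=
    pi_near_id A W Wbar hW pibar hpibar_id π hπ_lift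
  have hπW_nrm : ∀ u ∈ W, vnrm A (π u) = vnrm A u := by
    intro u huW
    rcases eq_or_ne u 0 with rfl | hu
    · rw [map_zero]
    · have h1 : π u = (π u - u) + u := by ring
      rw [h1, vnrm_add_eq_right A (hnear u huW hu)]
  have hπinj0 : ∀ u ∈ W, π u = 0 → u = 0 := by
    intro u huW h0
    by_contra hu
    have := hπW_nrm u huW
    rw [h0, (vnrm_eq_zero A).2 rfl] at this
    exact hu ((vnrm_eq_zero A).1 this.symm)
  -- the quasi-inverse ρ of π on W
  obtain ⟨W', hcompl⟩ := Submodule.exists_isCompl W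
  set q : (Fin n → K) →ₗ[K] W := Submodule.linearProjOfIsCompl W W' hcompl with hq
  set πW : W →ₗ[K] W := π.restrict (fun x _ => hπ_mem x) with hπW
  have hinj : Function.Injective πW := by
    intro a b hab
    have h1 : π (a : Fin n → K) = π (b : Fin n → K) := by
      have := congrArg (Subtype.val) hab
      simpa [hπW, LinearMap.restrict_apply] using this
    have h2 : π ((a : Fin n → K) - b) = 0 := by rw [map_sub, h1, sub_self]
    have h3 : (a : Fin n → K) - b = 0 := hπinj0 _ (W.sub_mem a.2 b.2) h2
    exact Subtype.ext (sub_eq_zero.1 h3)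
  have hsurj : Function.Surjective πW := LinearMap.injective_iff_surjective.1 hinj
  set e : W ≃ₗ[K] W := LinearEquiv.ofBijective πW ⟨hinj, hsurj⟩ with he
  set ρ : (Fin n → K) →ₗ[K] (Fin n → K) := W.subtype ∘ₗ (e.symm.toLinearMap ∘ₗ q) with hρ
  have hρ_mem : ∀ v, ρ v ∈ W := fun v => (e.symm (q v)).2
  have hπρ : ∀ v, v ∈ W → π (ρ v) = v := by
    intro v hv
    have h1 : π (ρ v) = (πW (e.symm (q v)) : Fin n → K) := by
      simp [hρ, hπW, LinearMap.restrict_apply]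
    rw [h1]
    have h2 : πW (e.symm (q v)) = e (e.symm (q v)) := rfl
    rw [h2, e.apply_symm_apply]
    have h3 : q v = ⟨v, hv⟩ := by
      rw [hq]
      exact Submodule.linearProjOfIsCompl_apply_left hcompl ⟨v, hv⟩
    rw [h3]
  have hρnrm : ∀ v, v ∈ W → vnrm A (ρ v) = vnrm A v := by
    intro v hv
    calc vnrm A (ρ v) = vnrm A (π (ρ v)) := (hπW_nrm _ (hρ_mem v)).symm
      _ = vnrm A v := by rw [hπρ v hv]
  -- closeness estimate
  have hclose : ∀ x ∈ B, ∀ y ∈ B,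
      vnrm A (y - ψ y) ≤ max (vnrm A (x - ψ x)) (vnrm A (y - x)) := by
    intro x hx y hy
    rcases eq_or_ne y x with rfl | hyx
    · exact le_max_left _ _
    · have hε := hψ.2 y hy x hx hyx
      calc vnrm A (y - ψ y)
          = vnrm A ((x - ψ x) + (-(ψ y - ψ x - (y - x)))) := by congr 1; ring
        _ ≤ max (vnrm A (x - ψ x)) (vnrm A (-(ψ y - ψ x - (y - x)))) := vnrm_add_le A _ _
        _ ≤ max (vnrm A (x - ψ x)) (vnrm A (y - x)) :=
            max_le_max le_rfl (by rw [vnrm_neg]; exact hε.le)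
  -- the correction predicate
  set P : (Fin n → K) → (Fin n → K) → Prop :=
    fun x w => w ∈ W ∧ x + w ∈ B ∧ π (ψ (x + w)) = π x with hP
  have hPex : ∀ x ∈ B, ∃ w, P x w := by
    intro x hx
    set r : A.ValueGroup := vnrm A (x - ψ x) with hr
    set D : Set (Fin n → K) := {w | vnrm A w ≤ r} with hD
    set T : (Fin n → K) → (Fin n → K) := fun w => ρ (π (x + w - ψ (x + w))) with hT
    have hDB : ∀ w ∈ D, x + w ∈ B := by
      intro w hw
      refine hB.2 x hx (ψ x) (hψB hx) (x + w) ?_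
      rw [show x - (x + w) = -w by ring, vnrm_neg]
      exact hw
    have hTn : ∀ w ∈ D, vnrm A (T w) ≤ r := by
      intro w hw
      have hyB := hDB w hw
      calc vnrm A (T w) = vnrm A (π (x + w - ψ (x + w))) := hρnrm _ (hπ_mem _)
        _ ≤ vnrm A ((x + w) - ψ (x + w)) := hbd _
        _ ≤ max (vnrm A (x - ψ x)) (vnrm A ((x + w) - x)) := hclose x hx (x + w) hyB
        _ ≤ r := max_le le_rfl (by rw [show x + w - x = w by ring]; exact hw)
    have hmapD : ∀ w ∈ D, T w ∈ D := fun w hw => hTn w hw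
    have habsD : ∀ w ∈ D, ∀ z, vnrm A (z - w) ≤ vnrm A (w - T w) → z ∈ D := by
      intro w hw z hz
      have h1 : vnrm A (w - T w) ≤ r := by
        rw [show w - T w = w + (-(T w)) by ring]
        exact (vnrm_add_le A _ _).trans (max_le hw (by rw [vnrm_neg]; exact hTn w hw))
      show vnrm A z ≤ r
      rw [show z = (z - w) + w by ring]
      exact (vnrm_add_le A _ _).trans (max_le (hz.trans h1) hw)
    have hcontrD : ∀ w₁ ∈ D, ∀ w₂ ∈ D, w₁ ≠ w₂ →
        vnrm A (T w₁ - T w₂) < vnrm A (w₁ - w₂) := by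
      intro w₁ hw₁ w₂ hw₂ hne'
      have hy1 := hDB w₁ hw₁
      have hy2 := hDB w₂ hw₂
      have hyne : x + w₁ ≠ x + w₂ := fun h => hne' ((add_right_inj x).1 h)
      have hε := hψ.2 (x + w₁) hy1 (x + w₂) hy2 hyne
      have hid : T w₁ - T w₂ =
          ρ (π (-(ψ (x + w₁) - ψ (x + w₂) - ((x + w₁) - (x + w₂))))) := by
        show ρ (π (x + w₁ - ψ (x + w₁))) - ρ (π (x + w₂ - ψ (x + w₂))) = _
        rw [← map_sub, ← map_sub]
        congr 2
        ring
      calc vnrm A (T w₁ - T w₂)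
          = vnrm A (π (-(ψ (x + w₁) - ψ (x + w₂) - ((x + w₁) - (x + w₂))))) := by
            rw [hid]; exact hρnrm _ (hπ_mem _)
        _ ≤ vnrm A (-(ψ (x + w₁) - ψ (x + w₂) - ((x + w₁) - (x + w₂)))) := hbd _
        _ = vnrm A (ψ (x + w₁) - ψ (x + w₂) - ((x + w₁) - (x + w₂))) := vnrm_neg A _
        _ < vnrm A ((x + w₁) - (x + w₂)) := hε
        _ = vnrm A (w₁ - w₂) := by congr 1; ring
    obtain ⟨w, hwD, hfix⟩ := exists_fixed A hsph T D
      ⟨0, by show vnrm A 0 ≤ r; rw [(vnrm_eq_zero A).2 rfl]; exact zero_le'⟩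
      hmapD habsD hcontrD
    refine ⟨w, ?_, hDB w hwD, ?_⟩
    · rw [← hfix]; exact hρ_mem _
    · have h1 : π w = π (x + w - ψ (x + w)) := by
        conv_lhs => rw [← hfix]
        exact hπρ _ (hπ_mem _)
      have h2 : π w = π x + π w - π (ψ (x + w)) := by
        conv_lhs => rw [h1]
        rw [map_sub, map_add]
      linear_combination h2
  -- key Lipschitz estimate
  have hkey : ∀ x₁ ∈ B, ∀ x₂ ∈ B, ∀ w₁ w₂, P x₁ w₁ → P x₂ w₂ → w₁ ≠ w₂ →
      vnrm A (w₁ - w₂) < vnrm A (x₁ - x₂) := by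
    rintro x₁ hx₁ x₂ hx₂ w₁ w₂ ⟨hW₁, hy₁B, hπ₁⟩ ⟨hW₂, hy₂B, hπ₂⟩ hww
    rcases eq_or_ne (x₁ + w₁) (x₂ + w₂) with hyy | hyy
    · exfalso
      have h1 : w₁ - w₂ = x₂ - x₁ := by linear_combination hyy
      have h2 : π x₁ = π x₂ := by rw [← hπ₁, ← hπ₂, hyy]
      have h3 : π (w₁ - w₂) = 0 := by rw [h1, map_sub, h2, sub_self]
      exact hww (sub_eq_zero.1 (hπinj0 _ (W.sub_mem hW₁ hW₂) h3))
    · have hε := hψ.2 (x₁ + w₁) hy₁B (x₂ + w₂) hy₂B hyy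
      have h5 : π (ψ (x₁ + w₁)) - π (ψ (x₂ + w₂)) = π x₁ - π x₂ := by rw [hπ₁, hπ₂]
      have h6 : π (ψ (x₁ + w₁)) - π (ψ (x₂ + w₂)) =
          (π x₁ - π x₂) + π (w₁ - w₂) +
            π (ψ (x₁ + w₁) - ψ (x₂ + w₂) - ((x₁ + w₁) - (x₂ + w₂))) := by
        simp only [← map_sub, ← map_add]
        congr 1
        ring
      have h4 : π (w₁ - w₂) =
          -(π (ψ (x₁ + w₁) - ψ (x₂ + w₂) - ((x₁ + w₁) - (x₂ + w₂)))) := by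
        linear_combination h5 - h6
      have h8 : vnrm A (w₁ - w₂) < max (vnrm A (x₁ - x₂)) (vnrm A (w₁ - w₂)) := by
        calc vnrm A (w₁ - w₂)
            = vnrm A (π (w₁ - w₂)) := (hπW_nrm _ (W.sub_mem hW₁ hW₂)).symm
          _ = vnrm A (π (ψ (x₁ + w₁) - ψ (x₂ + w₂) - ((x₁ + w₁) - (x₂ + w₂)))) := by
              rw [h4, vnrm_neg]
          _ ≤ vnrm A (ψ (x₁ + w₁) - ψ (x₂ + w₂) - ((x₁ + w₁) - (x₂ + w₂))) := hbd _
          _ < vnrm A ((x₁ + w₁) - (x₂ + w₂)) := hε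
          _ = vnrm A ((x₁ - x₂) + (w₁ - w₂)) := by congr 1; ring
          _ ≤ max (vnrm A (x₁ - x₂)) (vnrm A (w₁ - w₂)) := vnrm_add_le A _ _
      rcases lt_max_iff.1 h8 with h | h
      · exact h
      · exact absurd h (lt_irrefl _)
  have huniq : ∀ x ∈ B, ∀ w₁ w₂, P x w₁ → P x w₂ → w₁ = w₂ := by
    intro x hx w₁ w₂ h1 h2
    by_contra hne'
    have h3 := hkey x hx x hx w₁ w₂ h1 h2 hne'
    rw [sub_self, (vnrm_eq_zero A).2 rfl] at h3
    exact absurd h3 (not_lt.2 zero_le')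
  choose! wf hwf using hPex
  set φ : (Fin n → K) → (Fin n → K) := fun x => ψ (x + wf x) with hφ
  have hlip : ∀ x₁ ∈ B, ∀ x₂ ∈ B, x₁ ≠ x₂ →
      vnrm A (wf x₁ - wf x₂) < vnrm A (x₁ - x₂) := by
    intro x₁ hx₁ x₂ hx₂ hx12
    rcases eq_or_ne (wf x₁) (wf x₂) with heq | hne'
    · rw [heq, sub_self, (vnrm_eq_zero A).2 rfl]
      exact vnrm_pos A (sub_ne_zero.2 hx12)
    · exact hkey x₁ hx₁ x₂ hx₂ _ _ (hwf x₁ hx₁) (hwf x₂ hx₂) hne'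
  have hriso : ∀ x₁ ∈ B, ∀ x₂ ∈ B, x₁ ≠ x₂ →
      vnrm A (φ x₁ - φ x₂ - (x₁ - x₂)) < vnrm A (x₁ - x₂) := by
    intro x₁ hx₁ x₂ hx₂ hx12
    have hw := hlip x₁ hx₁ x₂ hx₂ hx12
    have hy12 : x₁ + wf x₁ ≠ x₂ + wf x₂ := by
      intro h
      have h1 : x₁ - x₂ = -(wf x₁ - wf x₂) := by linear_combination h
      rw [h1, vnrm_neg] at hw
      exact absurd hw (lt_irrefl _)
    have hε := hψ.2 (x₁ + wf x₁) (hwf x₁ hx₁).2.1 (x₂ + wf x₂) (hwf x₂ hx₂).2.1 hy12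
    have hid : φ x₁ - φ x₂ - (x₁ - x₂) =
        (ψ (x₁ + wf x₁) - ψ (x₂ + wf x₂) - ((x₁ + wf x₁) - (x₂ + wf x₂)))
          + (wf x₁ - wf x₂) := by
      show ψ (x₁ + wf x₁) - ψ (x₂ + wf x₂) - (x₁ - x₂) = _
      ring
    rw [hid]
    have hyb : vnrm A ((x₁ + wf x₁) - (x₂ + wf x₂)) ≤ vnrm A (x₁ - x₂) := by
      calc vnrm A ((x₁ + wf x₁) - (x₂ + wf x₂))
          = vnrm A ((x₁ - x₂) + (wf x₁ - wf x₂)) := by congr 1; ring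
        _ ≤ max (vnrm A (x₁ - x₂)) (vnrm A (wf x₁ - wf x₂)) := vnrm_add_le A _ _
        _ ≤ vnrm A (x₁ - x₂) := max_le le_rfl hw.le
    exact lt_of_le_of_lt (vnrm_add_le A _ _) (max_lt (hε.trans_le hyb) hw)
  have hmaps : Set.MapsTo φ B B := fun x hx => hψB (hwf x hx).2.1
  have hinjφ : Set.InjOn φ B := by
    intro x₁ hx₁ x₂ hx₂ heq
    by_contra hne'
    have h1 := hriso x₁ hx₁ x₂ hx₂ hne'
    rw [heq, sub_self, zero_sub, vnrm_neg] at h1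
    exact absurd h1 (lt_irrefl _)
  have hsurjφ : Set.SurjOn φ B B := by
    intro y hy
    obtain ⟨z, hz, hψz⟩ := hψ.1.2.2 hy
    set w₀ : Fin n → K := ρ (π (z - ψ z)) with hw₀
    have hw₀W : w₀ ∈ W := hρ_mem _
    have hw₀n : vnrm A w₀ ≤ vnrm A (z - ψ z) := by
      rw [hw₀, hρnrm _ (hπ_mem _)]
      exact hbd _
    set x := z - w₀ with hx
    have hxB : x ∈ B := by
      refine hB.2 z hz (ψ z) (hψB hz) x ?_
      rw [show z - x = w₀ by rw [hx]; ring]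
      exact hw₀n
    have hxw : x + w₀ = z := by rw [hx]; ring
    have hPx : P x w₀ := by
      refine ⟨hw₀W, by rw [hxw]; exact hz, ?_⟩
      rw [hxw]
      have h1 : π w₀ = π (z - ψ z) := hπρ _ (hπ_mem _)
      rw [hx, map_sub, h1, map_sub]
      ring
    have heqw := huniq x hxB w₀ (wf x) hPx (hwf x hxB)
    refine ⟨x, hxB, ?_⟩
    show ψ (x + wf x) = y
    rw [← heqw, hxw, hψz]
  have hχ : ∀ x ∈ B, χ (φ x) = χ (ψ x) := by
    intro x hx
    refine hstraight (x + wf x) (hwf x hx).2.1 x hx ?_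
    rw [show x + wf x - x = wf x by ring]
    exact (hwf x hx).1
  have hπφ : ∀ x ∈ B, π (φ x) = π x := fun x hx => (hwf x hx).2.2
  refine ⟨φ, ⟨⟨hmaps, hinjφ, hsurjφ⟩, hriso⟩, hχ, hπφ, ?_, ?_⟩
  · intro x hx x' hx' hWmem
    rw [hχ x hx, hχ x' hx']
    exact hstraight x hx x' hx' hWmem
  · intro w
    refine ⟨⟨⟨fun x hx => ⟨hmaps hx.1, ?_⟩, hinjφ.mono Set.inter_subset_left,
        fun y hy => ?_⟩, fun x₁ hx₁ x₂ hx₂ h => hriso x₁ hx₁.1 x₂ hx₂.1 h⟩,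
      fun x hx => (hχ x hx.1).symm⟩
    · have hx2 : π x = w := hx.2
      simp only [Set.mem_preimage, Set.mem_singleton_iff]
      rw [hπφ x hx.1, hx2]
    · obtain ⟨x, hx, hfx⟩ := hsurjφ hy.1
      refine ⟨x, ⟨hx, ?_⟩, hfx⟩
      simp only [Set.mem_preimage, Set.mem_singleton_iff]
      have hy2 : π y = w := hy.2
      rw [← hπφ x hx, hfx, hy2]
end

section
/- Let K be a valued field of equi-characteristic 0 with residue field RF(K), and let v₁, v₂ ∈ Kⁿ with res(K·v₁) ≠ res(K·v₂) as subspaces of RF(K)ⁿ. Then res(K·(v₁ + v₂)) ⊆ res(K·v₁) + res(K·v₂). -/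
open scoped Classical

variable {K : Type*} [Field K]

/-- `res(K·v₀)`: the image in `RF(K)ⁿ` of the intersection of the line `K·v₀`
with `𝒪(K)ⁿ` under the residue map. -/
def lineRes (A : ValuationSubring K) {n : ℕ} (v₀ : Fin n → K) :
    Set (Fin n → IsLocalRing.ResidueField A) :=
  {yb | ∃ x ∈ Submodule.span K ({v₀} : Set (Fin n → K)),
    (∀ i, x i ∈ A) ∧ resVec A x = yb}

lemma resVec_apply (A : ValuationSubring K) {n : ℕ} (x : Fin n → K) (i : Fin n)
    (h : x i ∈ A) : resVec A x i = IsLocalRing.residue A ⟨x i, h⟩ := dif_pos h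

lemma lineRes_eq_span (A : ValuationSubring K) {n : ℕ} (v w : Fin n → K)
    (u : K) (hu : u ≠ 0) (hw : w = u • v)
    (hwA : ∀ i, w i ∈ A) (j₀ : Fin n) (hj : A.valuation (w j₀) = 1) :
    lineRes A v =
      (Submodule.span (IsLocalRing.ResidueField A) {resVec A w} : Set _) := by
  ext y
  constructor
  · rintro ⟨x, hx, hxA, rfl⟩
    obtain ⟨t, rfl⟩ := Submodule.mem_span_singleton.1 hx
    set s : K := t * u⁻¹ with hs
    have hxw : t • v = s • w := by
      rw [hw, smul_smul, hs, mul_assoc, inv_mul_cancel₀ hu, mul_one]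
    have hsA : s ∈ A := by
      rw [← A.valuation_le_one_iff]
      have h1 : A.valuation ((t • v) j₀) ≤ 1 := (A.valuation_le_one_iff _).2 (hxA j₀)
      rw [hxw] at h1
      simpa [Valuation.map_mul, hj] using h1
    refine Submodule.mem_span_singleton.2 ⟨IsLocalRing.residue A ⟨s, hsA⟩, ?_⟩
    funext i
    rw [Pi.smul_apply, resVec_apply A _ i (hxA i), resVec_apply A w i (hwA i),
      smul_eq_mul, ← map_mul]
    congr 1
    ext
    have : (t • v) i = s * w i := by rw [hxw]; simp [mul_comm]
    simpa using this.symm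
  · intro hy
    obtain ⟨r, hr⟩ := Submodule.mem_span_singleton.1 hy
    obtain ⟨⟨s, hsA⟩, rfl⟩ := Ideal.Quotient.mk_surjective r
    refine ⟨s • w, ?_, fun i => by simpa using A.mul_mem _ _ hsA (hwA i), ?_⟩
    · rw [hw, smul_smul]
      exact Submodule.mem_span_singleton.2 ⟨s * u, rfl⟩
    · rw [← hr]
      funext i
      show resVec A (s • w) i = (IsLocalRing.residue A ⟨s, hsA⟩ • resVec A w) i
      rw [Pi.smul_apply, resVec_apply A _ i (by simpa using A.mul_mem _ _ hsA (hwA i)),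
        resVec_apply A w i (hwA i), smul_eq_mul]
      show _ = IsLocalRing.residue A ⟨s, hsA⟩ * IsLocalRing.residue A ⟨w i, hwA i⟩
      rw [← map_mul]
      rfl

/-- in a valued field of equi-characteristic 0, if
`res(K·v₁) ≠ res(K·v₂)`, then `res(K·(v₁ + v₂)) ⊆ res(K·v₁) + res(K·v₂)`. -/
theorem lineRes_add_subset (A : ValuationSubring K) [CharZero K]
    [CharZero (IsLocalRing.ResidueField A)]
    {n : ℕ} (v₁ v₂ : Fin n → K) (hne : lineRes A v₁ ≠ lineRes A v₂) :
    ∀ z ∈ lineRes A (v₁ + v₂),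
      ∃ a ∈ lineRes A v₁, ∃ b ∈ lineRes A v₂, z = a + b := by
  rintro z ⟨x, hx, hxA, rfl⟩
  obtain ⟨c, rfl⟩ := Submodule.mem_span_singleton.1 hx
  by_cases h1 : ∀ i, c * v₁ i ∈ A
  · -- easy case: both pieces are integral
    have h2 : ∀ i, c * v₂ i ∈ A := by
      intro i
      have : c * v₂ i = (c • (v₁ + v₂)) i - c * v₁ i := by
        simp [mul_add]
      rw [this]
      exact A.sub_mem (hxA i) (h1 i)
    refine ⟨resVec A (c • v₁), ⟨c • v₁, Submodule.mem_span_singleton.2 ⟨c, rfl⟩,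
        fun i => by simpa using h1 i, rfl⟩,
      resVec A (c • v₂), ⟨c • v₂, Submodule.mem_span_singleton.2 ⟨c, rfl⟩,
        fun i => by simpa using h2 i, rfl⟩, ?_⟩
    funext i
    rw [Pi.add_apply, resVec_apply A _ i (hxA i),
      resVec_apply A (c • v₁) i (by simpa using h1 i),
      resVec_apply A (c • v₂) i (by simpa using h2 i), ← map_add]
    congr 1
    ext
    simp [mul_add]
  · push_neg at h1
    obtain ⟨i₁, hi₁⟩ := h1
    exfalso
    obtain ⟨i₀, -, hmax⟩ := Finset.exists_max_image Finset.univ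
      (fun i => A.valuation (c * v₁ i)) ⟨i₁, Finset.mem_univ i₁⟩
    have hM1 : 1 < A.valuation (c * v₁ i₀) :=
      lt_of_lt_of_le (not_le.1 fun h => hi₁ ((A.valuation_le_one_iff _).1 h))
        (hmax i₁ (Finset.mem_univ i₁))
    have hM0 : A.valuation (c * v₁ i₀) ≠ 0 := fun h => by simp [h] at hM1
    have hMne : c * v₁ i₀ ≠ 0 := fun h => hM0 (by simp [h])
    set d : K := (c * v₁ i₀)⁻¹ with hd
    have hd0 : d ≠ 0 := inv_ne_zero hMne
    have hc0 : c ≠ 0 := fun h => hi₁ (by rw [h, zero_mul]; exact A.zero_mem)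
    have hvd : A.valuation d = (A.valuation (c * v₁ i₀))⁻¹ := by
      rw [hd, map_inv₀]
    set w₁ : Fin n → K := (d * c) • v₁ with hw₁
    set w₂ : Fin n → K := (d * c) • v₂ with hw₂
    have hw₁A : ∀ i, w₁ i ∈ A := by
      intro i
      rw [← A.valuation_le_one_iff]
      have : A.valuation (w₁ i) = A.valuation d * A.valuation (c * v₁ i) := by
        simp [hw₁, mul_assoc]
      rw [this, hvd]
      calc (A.valuation (c * v₁ i₀))⁻¹ * A.valuation (c * v₁ i)
          ≤ (A.valuation (c * v₁ i₀))⁻¹ * A.valuation (c * v₁ i₀) :=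
            mul_le_mul_right (hmax i (Finset.mem_univ i)) _
        _ = 1 := inv_mul_cancel₀ hM0
    have hw₁j : A.valuation (w₁ i₀) = 1 := by
      have : w₁ i₀ = 1 := by
        simp only [hw₁, Pi.smul_apply, smul_eq_mul, hd]
        field_simp
        exact div_self (right_ne_zero_of_mul hMne)
      rw [this, map_one]
    have hsmall : ∀ i, A.valuation (d * (c • (v₁ + v₂)) i) < 1 := by
      intro i
      rw [Valuation.map_mul, hvd]
      calc (A.valuation (c * v₁ i₀))⁻¹ * A.valuation ((c • (v₁ + v₂)) i)
          ≤ (A.valuation (c * v₁ i₀))⁻¹ * 1 :=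
            mul_le_mul_right ((A.valuation_le_one_iff _).2 (hxA i)) _
        _ = (A.valuation (c * v₁ i₀))⁻¹ := mul_one _
        _ < 1 := inv_lt_one₀ (zero_lt_iff.2 hM0) |>.2 hM1
    have hsub : ∀ i, w₂ i = d * (c • (v₁ + v₂)) i - w₁ i := by
      intro i
      simp only [hw₂, hw₁, Pi.smul_apply, smul_eq_mul, Pi.add_apply]
      ring
    have hw₂A : ∀ i, w₂ i ∈ A := by
      intro i
      rw [hsub i]
      exact A.sub_mem ((A.valuation_le_one_iff _).1 (hsmall i).le) (hw₁A i)
    have hw₂j : A.valuation (w₂ i₀) = 1 := by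
      rw [hsub i₀]
      rw [Valuation.map_sub_eq_of_lt_right _ (by rw [hw₁j]; exact hsmall i₀), hw₁j]
    -- residues are negatives of each other
    have hres : resVec A w₂ = -(resVec A w₁) := by
      funext i
      rw [resVec_apply A w₂ i (hw₂A i), Pi.neg_apply, resVec_apply A w₁ i (hw₁A i)]
      have hsm : d * (c • (v₁ + v₂)) i ∈ A :=
        (A.valuation_le_one_iff _).1 (hsmall i).le
      have h0 : IsLocalRing.residue A ⟨d * (c • (v₁ + v₂)) i, hsm⟩ = 0 := by
        rw [IsLocalRing.residue_eq_zero_iff]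
        exact (A.valuation_lt_one_iff _).2 (hsmall i)
      have : (⟨w₂ i, hw₂A i⟩ : A) = ⟨d * (c • (v₁ + v₂)) i, hsm⟩ - ⟨w₁ i, hw₁A i⟩ := by
        ext; exact hsub i
      rw [this, map_sub, h0, zero_sub]
    have e₁ := lineRes_eq_span A v₁ w₁ (d * c) (mul_ne_zero hd0 hc0) rfl hw₁A i₀ hw₁j
    have e₂ := lineRes_eq_span A v₂ w₂ (d * c) (mul_ne_zero hd0 hc0) rfl hw₂A i₀ hw₂j
    apply hne
    rw [e₁, e₂, hres]
    have : -(resVec A w₁) = (-1 : IsLocalRing.ResidueField A) • resVec A w₁ := by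
      rw [neg_one_smul]
    rw [this, Submodule.span_singleton_smul_eq (isUnit_one.neg) _]
end
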